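/- arXiv:2003.03910 — 10 statements merged into one kernel-verified Lean document; each statement's English description precedes it below -/
import Mathlib

section
/- Let M be a real symmetric n×n matrix with eigenvalues σ₁ ≥ σ₂ ≥ … ≥ σ_n, all contained in the interval (−1, 1], and with σ₁ > |σ_n| > 0. Let d be the multiplicity of σ₁ (so σ_d = σ₁ > σ_{d+1}), and set η = (max_{i > d} |σ_i|)/σ₁, so η ∈ (0,1). Let v₀ ∈ ℝⁿ be such that the orthogonal projection of v₀ onto the eigenspace of M for σ₁ is nonzero, and set v_k = M^k v₀. Then v_k ≠ 0 for every k, and there exists a constant C ≥ 0 such that for all k ≥ 1, |1 − ⟨v_k, v_{k−1}⟩/(‖v_k‖·‖v_{k−1}‖)| ≤ C·η^{2k}. In particular the angle θ_k between v_k and v_{k−1} converges to 0 (Type I, straight-line trajectory). -/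
open Filter Matrix

/-- The Euclidean norm on `ℝⁿ` (realized as `Fin n → ℝ`). -/
noncomputable def euclNorm {n : ℕ} (x : Fin n → ℝ) : ℝ := Real.sqrt (∑ i, x i ^ 2)

lemma key_est (A B t P Q N : ℝ) (hA : 0 < A) (hB : 0 ≤ B) (ht : 0 ≤ t) (ht1 : t ≤ 1)
    (hP1 : A ≤ P) (hQ1 : A ≤ Q) (hP2 : P ≤ A + t * B) (hQ2 : Q ≤ A + t * B)
    (hN : |N - A| ≤ t * B) :
    |1 - N / (Real.sqrt P * Real.sqrt Q)| ≤ t * (B * (3 * A + B) / A ^ 2) := by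
  have hP0 : (0:ℝ) ≤ P := le_trans hA.le hP1
  have hQ0 : (0:ℝ) ≤ Q := le_trans hA.le hQ1
  have hD : Real.sqrt P * Real.sqrt Q = Real.sqrt (P * Q) := (Real.sqrt_mul hP0 Q).symm
  have hA2 : A ^ 2 ≤ P * Q := by nlinarith
  have hDA : A ≤ Real.sqrt (P * Q) := by
    have := Real.sqrt_le_sqrt hA2
    rwa [Real.sqrt_sq hA.le] at this
  have hD0 : (0:ℝ) < Real.sqrt (P * Q) := lt_of_lt_of_le hA hDA
  set D := Real.sqrt (P * Q) with hDdef
  have hDsq : D ^ 2 = P * Q := Real.sq_sqrt (by positivity)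
  have hPQ : P * Q ≤ A ^ 2 + t * (2 * A * B + B ^ 2) := by
    nlinarith [mul_le_mul hP2 hQ2 hQ0 (by positivity : (0:ℝ) ≤ A + t * B),
      mul_le_mul_of_nonneg_right ht1 (mul_nonneg ht (sq_nonneg B))]
  have hAD : A * D ≤ A ^ 2 + t * (2 * A * B + B ^ 2) := by
    nlinarith [mul_le_mul_of_nonneg_right hDA hD0.le]
  have hDup : D - A ≤ t * (2 * A * B + B ^ 2) / A := by
    rw [le_div_iff₀ hA]; nlinarith
  have hnum : |D - N| ≤ t * (2 * A * B + B ^ 2) / A + t * B := by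
    calc |D - N| ≤ |D - A| + |A - N| := abs_sub_le D A N
    _ = (D - A) + |N - A| := by rw [abs_of_nonneg (by linarith), abs_sub_comm]
    _ ≤ t * (2 * A * B + B ^ 2) / A + t * B := add_le_add hDup hN
  calc |1 - N / (Real.sqrt P * Real.sqrt Q)| = |D - N| / D := by
        rw [hD, show 1 - N / D = (D - N) / D by field_simp, abs_div, abs_of_pos hD0]
  _ ≤ (t * (2 * A * B + B ^ 2) / A + t * B) / A :=
      div_le_div₀ (by positivity) hnum hA hDA
  _ = t * (B * (3 * A + B) / A ^ 2) := by field_simp; ring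

/-- Type I trajectory: for a symmetric matrix `M` with eigenvalues in `(−1, 1]`,
sorted decreasingly, leading eigenvalue `σ 0` of multiplicity given by `d`, and
`σ 0 > |σ_last| > 0`, the iterates `v_k = M^k v₀` (with `v₀` having a nonzero
projection onto the leading eigenspace) are nonzero, the normalized inner product
of consecutive iterates converges to `1` at rate `η^{2k}`, and the angle `θ_k`
converges to `0`: the trajectory is eventually a straight line. -/
theorem typeI_straight_line_trajectory
    (n : ℕ) (M U : Matrix (Fin (n + 1)) (Fin (n + 1)) ℝ)
    (σ : Fin (n + 1) → ℝ)
    (hMsymm : M.IsSymm)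
    (hU : Uᵀ * U = 1)
    (hM : M = U * Matrix.diagonal σ * Uᵀ)
    (hsort : ∀ i j : Fin (n + 1), i ≤ j → σ j ≤ σ i)
    (hrange : ∀ i, σ i ∈ Set.Ioc (-1 : ℝ) 1)
    (hlead : |σ (Fin.last n)| < σ 0)
    (hposlast : 0 < |σ (Fin.last n)|)
    (d : Fin (n + 1))
    (hd1 : ∀ i, i ≤ d → σ i = σ 0)
    (hd2 : ∀ i, d < i → σ i < σ 0)
    (η : ℝ)
    (hη : η = sSup {x : ℝ | ∃ i, d < i ∧ x = |σ i|} / σ 0)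
    (v₀ : Fin (n + 1) → ℝ)
    (hproj : ∃ w : Fin (n + 1) → ℝ, M.mulVec w = σ 0 • w ∧ w ⬝ᵥ v₀ ≠ 0)
    (v : ℕ → (Fin (n + 1) → ℝ))
    (hv : ∀ k, v k = (M ^ k).mulVec v₀) :
    (∀ k, v k ≠ 0) ∧
    (∃ C : ℝ, 0 ≤ C ∧ ∀ k : ℕ, 1 ≤ k →
      |1 - (v k ⬝ᵥ v (k - 1)) / (euclNorm (v k) * euclNorm (v (k - 1)))| ≤ C * η ^ (2 * k)) ∧
    Tendsto
      (fun k => Real.arccos ((v k ⬝ᵥ v (k - 1)) / (euclNorm (v k) * euclNorm (v (k - 1)))))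
      atTop (nhds 0) := by
  have hσ0 : 0 < σ 0 := hposlast.trans hlead
  have hUU : U * Uᵀ = 1 := mul_eq_one_comm.mp hU
  set c : Fin (n + 1) → ℝ := Uᵀ.mulVec v₀ with hc
  -- powers of M
  have hMk : ∀ k, M ^ k = U * Matrix.diagonal (fun i => σ i ^ k) * Uᵀ := by
    intro k
    induction k with
    | zero => simp [hUU]
    | succ k ih =>
      rw [pow_succ, ih, hM]
      calc U * Matrix.diagonal (fun i => σ i ^ k) * Uᵀ * (U * Matrix.diagonal σ * Uᵀ)
          = U * (Matrix.diagonal (fun i => σ i ^ k) * (Uᵀ * U) * Matrix.diagonal σ) * Uᵀ := by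
            noncomm_ring
        _ = U * Matrix.diagonal (fun i => σ i ^ (k+1)) * Uᵀ := by
            rw [hU, mul_one, Matrix.diagonal_mul_diagonal]
            congr 1
  have htrans : ∀ k : ℕ, (M ^ k)ᵀ = M ^ k := by
    intro k; rw [Matrix.transpose_pow, hMsymm.eq]
  set S : ℕ → ℝ := fun m => ∑ i, σ i ^ m * c i ^ 2 with hS
  have hdot : ∀ k j, v k ⬝ᵥ v j = S (k + j) := by
    intro k j
    rw [hv, hv, ← Matrix.vecMul_transpose, ← Matrix.dotProduct_mulVec,
      Matrix.mulVec_mulVec, htrans, ← pow_add, hMk,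
      show U * Matrix.diagonal (fun i => σ i ^ (k+j)) * Uᵀ
        = U * (Matrix.diagonal (fun i => σ i ^ (k+j)) * Uᵀ) by rw [Matrix.mul_assoc],
      ← Matrix.mulVec_mulVec, Matrix.dotProduct_mulVec, ← Matrix.mulVec_transpose,
      ← Matrix.mulVec_mulVec]
    simp only [hS, hc, dotProduct, Matrix.mulVec_diagonal]
    exact Finset.sum_congr rfl fun i _ => by ring
  -- eigenvector gives a nonzero leading coefficient
  obtain ⟨w, hw1, hw2⟩ := hproj
  set b : Fin (n + 1) → ℝ := Uᵀ.mulVec w with hbdef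
  have hbv : U.mulVec b = w := by
    rw [hbdef, Matrix.mulVec_mulVec, hUU, Matrix.one_mulVec]
  have hbe : ∀ i, σ i * b i = σ 0 * b i := by
    intro i
    have h1 : Uᵀ.mulVec (M.mulVec w) = (Matrix.diagonal σ).mulVec b := by
      rw [hM, Matrix.mulVec_mulVec, show Uᵀ * (U * Matrix.diagonal σ * Uᵀ)
        = Matrix.diagonal σ * Uᵀ by rw [← Matrix.mul_assoc, ← Matrix.mul_assoc, hU, Matrix.one_mul],
        ← Matrix.mulVec_mulVec, hbdef]
    have h2 := congrArg (fun x => Uᵀ.mulVec x i) hw1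
    rw [show Uᵀ.mulVec (σ 0 • w) = σ 0 • b by rw [Matrix.mulVec_smul, hbdef]] at h2
    rw [h1] at h2
    simpa [Matrix.mulVec_diagonal] using h2
  have hbd : ∀ i, d < i → b i = 0 := by
    intro i hi
    have h := hbe i
    have hne : σ i ≠ σ 0 := ne_of_lt (hd2 i hi)
    by_contra hb0
    exact hne (mul_right_cancel₀ hb0 h)
  have hex : ∃ i, i ≤ d ∧ c i ≠ 0 := by
    by_contra h
    push_neg at h
    apply hw2
    have hwv : w ⬝ᵥ v₀ = ∑ i, b i * c i := by
      rw [← hbv, ← Matrix.vecMul_transpose, ← Matrix.dotProduct_mulVec, hc]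
      rfl
    rw [hwv]
    apply Finset.sum_eq_zero
    intro i _
    rcases le_or_gt i d with h1 | h1
    · rw [h i h1, mul_zero]
    · rw [hbd i h1, zero_mul]
  set A : ℝ := ∑ i ∈ Finset.univ.filter (fun i => i ≤ d), c i ^ 2 with hAdef
  set B : ℝ := ∑ i ∈ Finset.univ.filter (fun i => ¬ i ≤ d), c i ^ 2 with hBdef
  have hA : 0 < A := by
    obtain ⟨i₀, hi₀, hci₀⟩ := hex
    have h1 : 0 < c i₀ ^ 2 := lt_of_le_of_ne (sq_nonneg _) (Ne.symm (pow_ne_zero 2 hci₀))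
    have h2 : c i₀ ^ 2 ≤ A :=
      Finset.single_le_sum (fun i _ => sq_nonneg (c i)) (by simp [hi₀])
    linarith
  have hB : 0 ≤ B := Finset.sum_nonneg fun i _ => sq_nonneg _
  have hS_split : ∀ m, S m = σ 0 ^ m * A +
      ∑ i ∈ Finset.univ.filter (fun i => ¬ i ≤ d), σ i ^ m * c i ^ 2 := by
    intro m
    simp only [hS]
    rw [← Finset.sum_filter_add_sum_filter_not Finset.univ (fun i => i ≤ d)
      (fun i => σ i ^ m * c i ^ 2)]
    congr 1
    rw [hAdef, Finset.mul_sum]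
    apply Finset.sum_congr rfl
    intro i hi
    rw [hd1 i (Finset.mem_filter.mp hi).2]
  -- the spectral gap η
  have hdlast : d < Fin.last n := by
    by_contra h
    push_neg at h
    rw [hd1 (Fin.last n) h] at hlead
    linarith [le_abs_self (σ 0)]
  have hsetfin : {x : ℝ | ∃ i, d < i ∧ x = |σ i|}.Finite := by
    apply (Set.finite_range (fun i => |σ i|)).subset
    rintro x ⟨i, _, hx⟩
    exact ⟨i, hx.symm⟩
  have hsetne : {x : ℝ | ∃ i, d < i ∧ x = |σ i|}.Nonempty :=
    ⟨|σ (Fin.last n)|, Fin.last n, hdlast, rfl⟩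
  have hTmem : sSup {x : ℝ | ∃ i, d < i ∧ x = |σ i|} ∈ {x : ℝ | ∃ i, d < i ∧ x = |σ i|} :=
    hsetne.csSup_mem hsetfin
  have hTub : ∀ i, d < i → |σ i| ≤ sSup {x : ℝ | ∃ i, d < i ∧ x = |σ i|} :=
    fun i hi => le_csSup hsetfin.bddAbove ⟨i, hi, rfl⟩
  have hTpos : 0 < sSup {x : ℝ | ∃ i, d < i ∧ x = |σ i|} :=
    lt_of_lt_of_le hposlast (hTub _ hdlast)
  have hTlt : sSup {x : ℝ | ∃ i, d < i ∧ x = |σ i|} < σ 0 := by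
    obtain ⟨j, hj, hTj⟩ := hTmem
    rw [hTj, abs_lt]
    constructor
    · linarith [neg_abs_le (σ (Fin.last n)), hsort j (Fin.last n) (Fin.le_last j)]
    · exact hd2 j hj
  have hη0 : 0 < η := hη ▸ div_pos hTpos hσ0
  have hη1 : η < 1 := hη ▸ (div_lt_one hσ0).mpr hTlt
  have hησ : ∀ i, d < i → |σ i| ≤ η * σ 0 := by
    intro i hi
    rw [hη, div_mul_cancel₀ _ hσ0.ne']
    exact hTub i hi
  -- bounds on the remainder
  have hRnn : ∀ j : ℕ, 0 ≤ ∑ i ∈ Finset.univ.filter (fun i => ¬ i ≤ d), σ i ^ (2*j) * c i ^ 2 :=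
    fun j => Finset.sum_nonneg fun i _ => by rw [pow_mul]; positivity
  have hRb : ∀ m : ℕ, |∑ i ∈ Finset.univ.filter (fun i => ¬ i ≤ d), σ i ^ m * c i ^ 2|
      ≤ η ^ m * σ 0 ^ m * B := by
    intro m
    calc |∑ i ∈ Finset.univ.filter (fun i => ¬ i ≤ d), σ i ^ m * c i ^ 2|
        ≤ ∑ i ∈ Finset.univ.filter (fun i => ¬ i ≤ d), |σ i ^ m * c i ^ 2| :=
          Finset.abs_sum_le_sum_abs _ _
      _ ≤ ∑ i ∈ Finset.univ.filter (fun i => ¬ i ≤ d), (η * σ 0) ^ m * c i ^ 2 := by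
          apply Finset.sum_le_sum
          intro i hi
          rw [abs_mul, abs_pow, abs_of_nonneg (sq_nonneg (c i))]
          exact mul_le_mul_of_nonneg_right
            (pow_le_pow_left₀ (abs_nonneg _) (hησ i (not_le.mp (Finset.mem_filter.mp hi).2)) m)
            (sq_nonneg _)
      _ = η ^ m * σ 0 ^ m * B := by rw [hBdef, Finset.mul_sum, mul_pow]
  -- normalized quantities
  have hbound : ∀ m m' : ℕ, m' ≤ m → |S m / σ 0 ^ m - A| ≤ η ^ m' * B := by
    intro m m' hm
    rw [hS_split m]
    have hpow : (0:ℝ) < σ 0 ^ m := pow_pos hσ0 m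
    rw [show (σ 0 ^ m * A + ∑ i ∈ Finset.univ.filter (fun i => ¬ i ≤ d), σ i ^ m * c i ^ 2)
        / σ 0 ^ m - A
      = (∑ i ∈ Finset.univ.filter (fun i => ¬ i ≤ d), σ i ^ m * c i ^ 2) / σ 0 ^ m by
        field_simp; ring]
    rw [abs_div, abs_of_pos hpow, div_le_iff₀ hpow]
    calc |∑ i ∈ Finset.univ.filter (fun i => ¬ i ≤ d), σ i ^ m * c i ^ 2|
        ≤ η ^ m * σ 0 ^ m * B := hRb m
      _ ≤ η ^ m' * σ 0 ^ m * B := by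
          have h := pow_le_pow_of_le_one hη0.le hη1.le hm
          exact mul_le_mul_of_nonneg_right
            (mul_le_mul_of_nonneg_right h (pow_nonneg hσ0.le m)) hB
      _ = η ^ m' * B * σ 0 ^ m := by ring
  have hge : ∀ j : ℕ, A ≤ S (2*j) / σ 0 ^ (2*j) := by
    intro j
    rw [hS_split (2*j), le_div_iff₀ (pow_pos hσ0 _)]
    nlinarith [hRnn j]
  have hSpos : ∀ j : ℕ, 0 < S (2*j) := by
    intro j
    have := hge j
    have hpow : (0:ℝ) < σ 0 ^ (2*j) := pow_pos hσ0 _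
    nlinarith [(le_div_iff₀ hpow).mp this]
  -- v k is nonzero
  have hvne : ∀ k, v k ≠ 0 := by
    intro k h
    have h1 := hdot k k
    rw [h, zero_dotProduct, ← two_mul] at h1
    exact absurd h1.symm (hSpos k).ne'
  -- euclNorm as sqrt of S
  have hnorm : ∀ k, euclNorm (v k) = Real.sqrt (S (2*k)) := by
    intro k
    unfold euclNorm
    congr 1
    have h1 : ∑ i, v k i ^ 2 = v k ⬝ᵥ v k := by
      simp [dotProduct, sq]
    rw [h1, hdot, ← two_mul]
  -- normalization of square roots
  have hfact : ∀ i : ℕ, Real.sqrt (S (2*i)) = σ 0 ^ i * Real.sqrt (S (2*i) / σ 0 ^ (2*i)) := by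
    intro i
    have h2 : Real.sqrt (σ 0 ^ (2*i)) = σ 0 ^ i := by
      rw [show 2*i = i*2 by ring, pow_mul, Real.sqrt_sq (pow_nonneg hσ0.le i)]
    rw [Real.sqrt_div (hSpos i).le, h2]
    field_simp
  -- the main estimate
  set C : ℝ := B * (3 * A + B) / A ^ 2 / η ^ 2 with hCdef
  have hC : 0 ≤ C :=
    div_nonneg (div_nonneg (mul_nonneg hB (by nlinarith)) (sq_nonneg A)) (sq_nonneg η)
  have hmain : ∀ k : ℕ, 1 ≤ k →
      |1 - (v k ⬝ᵥ v (k - 1)) / (euclNorm (v k) * euclNorm (v (k - 1)))| ≤ C * η ^ (2 * k) := by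
    intro k hk
    obtain ⟨j, rfl⟩ : ∃ j, k = j + 1 := ⟨k - 1, by omega⟩
    rw [show j + 1 - 1 = j from rfl, hdot, hnorm, hnorm,
      show (j + 1) + j = 2 * j + 1 by ring]
    have hexpr : S (2*j+1) / (Real.sqrt (S (2*(j+1))) * Real.sqrt (S (2*j)))
        = (S (2*j+1) / σ 0 ^ (2*j+1)) /
          (Real.sqrt (S (2*(j+1)) / σ 0 ^ (2*(j+1))) * Real.sqrt (S (2*j) / σ 0 ^ (2*j))) := by
      rw [hfact (j+1), hfact j,
        show σ 0 ^ (j+1) * Real.sqrt (S (2*(j+1)) / σ 0 ^ (2*(j+1)))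
            * (σ 0 ^ j * Real.sqrt (S (2*j) / σ 0 ^ (2*j)))
          = σ 0 ^ (2*j+1) * (Real.sqrt (S (2*(j+1)) / σ 0 ^ (2*(j+1)))
            * Real.sqrt (S (2*j) / σ 0 ^ (2*j))) by
            rw [show 2*j+1 = (j+1) + j by ring, pow_add]; ring,
        ← div_div]
    rw [hexpr]
    have habs2 := abs_le.mp (hbound (2*(j+1)) (2*j) (by omega))
    have habs0 := abs_le.mp (hbound (2*j) (2*j) le_rfl)
    have hNb := hbound (2*j+1) (2*j) (by omega)
    have hkey := key_est A B (η^(2*j))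
      (S (2*(j+1)) / σ 0 ^ (2*(j+1))) (S (2*j) / σ 0 ^ (2*j)) (S (2*j+1) / σ 0 ^ (2*j+1))
      hA hB (by positivity) (pow_le_one₀ hη0.le hη1.le)
      (hge (j+1)) (hge j) (by linarith [habs2.2]) (by linarith [habs0.2]) hNb
    refine le_trans hkey (le_of_eq ?_)
    rw [hCdef, show 2*(j+1) = 2*j + 2 by ring, pow_add]
    have hηne : η ≠ 0 := hη0.ne'
    have hAne : A ≠ 0 := hA.ne'
    field_simp
  refine ⟨hvne, ⟨C, hC, hmain⟩, ?_⟩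
  -- the angle tends to zero
  have hgl : Tendsto (fun k : ℕ => C * η ^ (2*k)) atTop (nhds 0) := by
    have h1 : Tendsto (fun k : ℕ => (η^2)^k) atTop (nhds 0) :=
      tendsto_pow_atTop_nhds_zero_of_lt_one (by positivity) (by nlinarith)
    have h2 := h1.const_mul C
    rw [mul_zero] at h2
    simpa [pow_mul] using h2
  have hcos : Tendsto
      (fun k => (v k ⬝ᵥ v (k - 1)) / (euclNorm (v k) * euclNorm (v (k - 1))))
      atTop (nhds 1) := by
    rw [← tendsto_sub_nhds_zero_iff]
    apply squeeze_zero_norm' ?_ hgl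
    filter_upwards [eventually_ge_atTop 1] with k hk
    rw [Real.norm_eq_abs, abs_sub_comm]
    exact hmain k hk
  have hfin := (Real.continuous_arccos.tendsto 1).comp hcos
  rw [Real.arccos_one] at hfin
  exact hfin
end

section
/- Let σ ∈ (0,1), η ∈ (0,1) and ψ ∈ (0, π/2]. Let P be a real symmetric idempotent n×n matrix (an orthogonal projection), and let Γ₁, Γ₂ be real n×n matrices satisfying: P Γ₁ = Γ₁ = Γ₁ P, Γ₁ᵀ Γ₁ = σ² P, Γ₁ + Γ₁ᵀ = 2σ cos(ψ) P, (I − P) Γ₂ = Γ₂ = Γ₂ (I − P), and operator norm ‖Γ₂‖ ≤ η σ. Set M = Γ₁ + Γ₂ (this is the orthogonal quasi-diagonalization of a Type II normal matrix whose leading 2×2 blocks all equal σ times the planar rotation by angle ψ, and whose remaining spectrum has modulus at most ησ). Let v₀ ∈ ℝⁿ with P v₀ ≠ 0 and v_k = M^k v₀. Then v_k ≠ 0 for all k, and there exists a constant C ≥ 0 such that for all k ≥ 1, |⟨v_k, v_{k−1}⟩/(‖v_k‖·‖v_{k−1}‖) − cos ψ| ≤ C·η^{2k}. In particular the angle θ_k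 between v_k and v_{k−1} converges to ψ (Type II, logarithmic-spiral trajectory). -/
open Filter Matrix

/-- The operator norm of a matrix, induced by the Euclidean norm. -/
noncomputable def matOpNorm {n : ℕ} (A : Matrix (Fin n) (Fin n) ℝ) : ℝ :=
  ‖Matrix.toEuclideanCLM (𝕜 := ℝ) A‖

lemma euclNorm_eq {n : ℕ} (x : Fin n → ℝ) :
    euclNorm x = ‖(WithLp.equiv 2 (Fin n → ℝ)).symm x‖ := by
  rw [EuclideanSpace.norm_eq, euclNorm]
  simp [sq_abs]

lemma euclNorm_mulVec_le {n : ℕ} (A : Matrix (Fin n) (Fin n) ℝ) (x : Fin n → ℝ) :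
    euclNorm (A.mulVec x) ≤ matOpNorm A * euclNorm x := by
  rw [euclNorm_eq, euclNorm_eq]
  have := (Matrix.toEuclideanCLM (𝕜 := ℝ) A).le_opNorm ((WithLp.equiv 2 (Fin n → ℝ)).symm x)
  exact this

lemma dot_eq_inner {n : ℕ} (x y : Fin n → ℝ) :
    x ⬝ᵥ y = inner ℝ ((WithLp.equiv 2 (Fin n → ℝ)).symm x) ((WithLp.equiv 2 (Fin n → ℝ)).symm y) := by
  rw [PiLp.inner_apply]
  simp [dotProduct, mul_comm]

lemma abs_dot_le {n : ℕ} (x y : Fin n → ℝ) :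
    |x ⬝ᵥ y| ≤ euclNorm x * euclNorm y := by
  rw [dot_eq_inner, euclNorm_eq, euclNorm_eq]
  exact abs_real_inner_le_norm _ _

lemma dot_self_eq {n : ℕ} (x : Fin n → ℝ) : x ⬝ᵥ x = euclNorm x ^ 2 := by
  rw [euclNorm]
  rw [Real.sq_sqrt (by positivity)]
  simp [dotProduct, sq]

lemma mulVec_dot {n : ℕ} (A : Matrix (Fin n) (Fin n) ℝ) (x y : Fin n → ℝ) :
    (A.mulVec x) ⬝ᵥ y = x ⬝ᵥ (Aᵀ.mulVec y) := by
  rw [dotProduct_mulVec x Aᵀ y, vecMul_transpose]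

lemma key_est_s2 (σ η S Q A B cψ E β₁ β₂ d : ℝ)
    (hσ : 0 < σ) (hη0 : 0 < η) (hη1 : η ≤ 1)
    (hS : 0 < S) (hQ : 0 < Q) (hQ1 : Q ≤ 1)
    (hA : 0 < A) (hB : 0 ≤ B) (hc : |cψ| ≤ 1)
    (hE : |E| ≤ Q*η*σ*S*B)
    (hβ₁0 : 0 ≤ β₁) (hβ₁ : β₁ ≤ Q*η^2*σ^2*S*B)
    (hβ₂0 : 0 ≤ β₂) (hβ₂ : β₂ ≤ Q*S*B)
    (hd : d = Real.sqrt (σ^2*S*A + β₁) * Real.sqrt (S*A + β₂)) :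
    |(cψ*(σ*S*A) + E)/d - cψ| ≤ Q*(3*A*B+B^2)/A^2 := by
  set s := σ*S*A with hs
  have hs0 : 0 < s := by positivity
  have hd2 : d^2 = (σ^2*S*A + β₁)*(S*A + β₂) := by
    rw [hd, mul_pow, Real.sq_sqrt (by positivity), Real.sq_sqrt (by positivity)]
  have hd0 : 0 ≤ d := by rw [hd]; positivity
  have hs2d2 : s^2 ≤ d^2 := by
    nlinarith [mul_nonneg hβ₁0 hβ₂0, mul_pos hS hA,
      mul_nonneg (mul_nonneg (sq_nonneg σ) hS.le) hβ₂0,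
      mul_nonneg (mul_nonneg hS.le hA.le) hβ₁0]
  have hsd : s ≤ d := by
    have := Real.sqrt_le_sqrt hs2d2
    rwa [Real.sqrt_sq hs0.le, Real.sqrt_sq hd0] at this
  have hd0' : 0 < d := lt_of_lt_of_le hs0 hsd
  have hEn : 0 ≤ |E| := abs_nonneg E
  have key : |cψ*s + E - cψ*d| ≤ |E| + (d - s) := by
    have h : cψ*s + E - cψ*d = E - cψ*(d-s) := by ring
    rw [h]
    calc |E - cψ*(d-s)| ≤ |E| + |cψ*(d-s)| := abs_sub E (cψ*(d-s))
      _ = |E| + |cψ| * (d-s) := by rw [abs_mul, abs_of_nonneg (by linarith : (0:ℝ) ≤ d - s)]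
      _ ≤ |E| + 1*(d-s) := by nlinarith
      _ = |E| + (d-s) := by ring
  have hrw : (cψ*s + E)/d - cψ = (cψ*s + E - cψ*d)/d := by
    field_simp
  rw [hrw, abs_div, abs_of_pos hd0']
  have hds2 : d - s ≤ (d^2 - s^2)/s := by
    rw [le_div_iff₀ hs0]; nlinarith
  have hη2 : η^2 ≤ 1 := by
    calc η^2 = η*η := sq η
      _ ≤ 1*1 := mul_le_mul hη1 hη1 hη0.le one_pos.le
      _ = 1 := by ring
  have hub : d^2 - s^2 ≤ Q*σ^2*S^2*(2*A*B+B^2) := by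
    have e : d^2 - s^2 = σ^2*S*A*β₂ + S*A*β₁ + β₁*β₂ := by
      rw [hd2, hs]
      ring
    have t1 : σ^2*S*A*β₂ ≤ σ^2*S*A*(Q*S*B) :=
      mul_le_mul_of_nonneg_left hβ₂ (by positivity)
    have t1' : σ^2*S*A*(Q*S*B) = Q*σ^2*S^2*(A*B) := by ring
    have t2 : S*A*β₁ ≤ S*A*(Q*η^2*σ^2*S*B) :=
      mul_le_mul_of_nonneg_left hβ₁ (by positivity)
    have X0 : (0:ℝ) ≤ Q*σ^2*S^2*(A*B) := by positivity
    have t2' : Q*σ^2*S^2*(A*B) * η^2 ≤ Q*σ^2*S^2*(A*B) * 1 :=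
      mul_le_mul_of_nonneg_left hη2 X0
    have t2'' : S*A*(Q*η^2*σ^2*S*B) = Q*σ^2*S^2*(A*B) * η^2 := by ring
    have t3 : β₁*β₂ ≤ (Q*η^2*σ^2*S*B)*(Q*S*B) :=
      mul_le_mul hβ₁ hβ₂ hβ₂0 (by positivity)
    have hQη : Q*η^2 ≤ 1 := by
      calc Q*η^2 ≤ 1*1 := mul_le_mul hQ1 hη2 (sq_nonneg η) one_pos.le
        _ = 1 := by ring
    have Y0 : (0:ℝ) ≤ Q*σ^2*S^2*B^2 := by positivity
    have t3' : Q*σ^2*S^2*B^2 * (Q*η^2) ≤ Q*σ^2*S^2*B^2 * 1 :=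
      mul_le_mul_of_nonneg_left hQη Y0
    have t3'' : (Q*η^2*σ^2*S*B)*(Q*S*B) = Q*σ^2*S^2*B^2 * (Q*η^2) := by ring
    have goal' : Q*σ^2*S^2*(2*A*B+B^2) = Q*σ^2*S^2*(A*B) + Q*σ^2*S^2*(A*B) + Q*σ^2*S^2*B^2 := by
      ring
    linarith
  have hfin : |cψ*s + E - cψ*d| / d ≤ Q*(3*A*B+B^2)/A^2 := by
    have hR0 : (0:ℝ) ≤ Q*(3*A*B+B^2)/A^2 := by positivity
    have step1 : |cψ*s + E - cψ*d| ≤ |E| + (d^2 - s^2)/s := by linarith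
    have step2 : |E| + (d^2 - s^2)/s ≤ (Q*(3*A*B+B^2)/A^2) * s := by
      have hmul : |E| * s + (d^2 - s^2) ≤ (Q*(3*A*B+B^2)/A^2) * s * s := by
        have hRs : (Q*(3*A*B+B^2)/A^2) * s * s = Q*(3*A*B+B^2)*(σ^2*S^2) := by
          rw [hs]; field_simp
        rw [hRs]
        have hEs : |E| * s ≤ (Q*η*σ*S*B)*(σ*S*A) := by
          rw [hs]
          exact mul_le_mul hE le_rfl (by positivity) (by positivity)
        have hEs2 : (Q*η*σ*S*B)*(σ*S*A) = Q*σ^2*S^2*(A*B) * η := by ring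
        have X0 : (0:ℝ) ≤ Q*σ^2*S^2*(A*B) := by positivity
        have t4 : Q*σ^2*S^2*(A*B) * η ≤ Q*σ^2*S^2*(A*B) * 1 :=
          mul_le_mul_of_nonneg_left hη1 X0
        linarith
      have heq : |E| + (d^2 - s^2)/s = (|E| * s + (d^2 - s^2))/s := by
        field_simp
      rw [heq, div_le_iff₀ hs0]
      linarith
    have step3 : (Q*(3*A*B+B^2)/A^2) * s ≤ (Q*(3*A*B+B^2)/A^2) * d :=
      mul_le_mul_of_nonneg_left hsd hR0
    rw [div_le_iff₀ hd0']
    linarith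
  exact hfin

lemma euclNorm_nonneg {n : ℕ} (x : Fin n → ℝ) : 0 ≤ euclNorm x := Real.sqrt_nonneg _

lemma euclNorm_pos {n : ℕ} {x : Fin n → ℝ} (hx : x ≠ 0) : 0 < euclNorm x := by
  rw [euclNorm_eq, norm_pos_iff]
  intro h
  exact hx ((WithLp.equiv 2 (Fin n → ℝ)).symm.injective (by simpa using h))

lemma euclNorm_sqrt_dot {n : ℕ} (x : Fin n → ℝ) : euclNorm x = Real.sqrt (x ⬝ᵥ x) := by
  simp [euclNorm, dotProduct, sq]

/-- Type II trajectory: `M = Γ₁ + Γ₂` where `Γ₁` is (in the quasi-diagonalization of a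
normal matrix) `σ` times a planar rotation by angle `ψ` on the range of the orthogonal
projection `P`, and `Γ₂` lives on the orthogonal complement with operator norm `≤ ησ`.
Then for `v₀` with `P v₀ ≠ 0` and `v_k = M^k v₀`, all `v_k` are nonzero, the normalized
inner product of consecutive iterates converges to `cos ψ` at rate `η^{2k}`, and the
angle `θ_k` converges to `ψ`: a logarithmic spiral. -/
theorem typeII_logarithmic_spiral_trajectory
    (n : ℕ) (σ η ψ : ℝ)
    (hσ : σ ∈ Set.Ioo (0 : ℝ) 1) (hη : η ∈ Set.Ioo (0 : ℝ) 1)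
    (hψ : ψ ∈ Set.Ioc (0 : ℝ) (Real.pi / 2))
    (P Γ₁ Γ₂ : Matrix (Fin n) (Fin n) ℝ)
    (hPsymm : P.IsSymm) (hPidem : P * P = P)
    (hPΓ₁ : P * Γ₁ = Γ₁) (hΓ₁P : Γ₁ * P = Γ₁)
    (hΓ₁norm : Γ₁ᵀ * Γ₁ = (σ ^ 2) • P)
    (hΓ₁rot : Γ₁ + Γ₁ᵀ = (2 * σ * Real.cos ψ) • P)
    (hPΓ₂ : (1 - P) * Γ₂ = Γ₂) (hΓ₂P : Γ₂ * (1 - P) = Γ₂)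
    (hΓ₂norm : matOpNorm Γ₂ ≤ η * σ)
    (M : Matrix (Fin n) (Fin n) ℝ) (hM : M = Γ₁ + Γ₂)
    (v₀ : Fin n → ℝ) (hproj : P.mulVec v₀ ≠ 0)
    (v : ℕ → (Fin n → ℝ)) (hv : ∀ k, v k = (M ^ k).mulVec v₀) :
    (∀ k, v k ≠ 0) ∧
    (∃ C : ℝ, 0 ≤ C ∧ ∀ k : ℕ, 1 ≤ k →
      |(v k ⬝ᵥ v (k - 1)) / (euclNorm (v k) * euclNorm (v (k - 1))) - Real.cos ψ|
        ≤ C * η ^ (2 * k)) ∧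
    Tendsto
      (fun k => Real.arccos ((v k ⬝ᵥ v (k - 1)) / (euclNorm (v k) * euclNorm (v (k - 1)))))
      atTop (nhds ψ) := by
  obtain ⟨hσ0, hσ1⟩ := hσ
  obtain ⟨hη0, hη1⟩ := hη
  obtain ⟨hψ0, hψ2⟩ := hψ
  have hPt : Pᵀ = P := hPsymm
  have hΓ₂P0 : Γ₂ * P = 0 := by
    have h := hΓ₂P
    rw [mul_sub, mul_one] at h
    exact sub_eq_self.mp h
  have hPΓ₂0 : P * Γ₂ = 0 := by
    have h := hPΓ₂
    rw [sub_mul, one_mul] at h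
    exact sub_eq_self.mp h
  set x₀ := P.mulVec v₀ with hx₀
  set y₀ := (1 - P).mulVec v₀ with hy₀
  set a : ℕ → (Fin n → ℝ) := fun k => (Γ₁ ^ k).mulVec x₀ with ha
  set b : ℕ → (Fin n → ℝ) := fun k => (Γ₂ ^ k).mulVec y₀ with hb
  have ha0 : a 0 = x₀ := by simp [ha]
  have hb0 : b 0 = y₀ := by simp [hb]
  have haS : ∀ k, a (k+1) = Γ₁.mulVec (a k) := by
    intro k
    simp only [ha]
    rw [pow_succ', ← Matrix.mulVec_mulVec]
  have hbS : ∀ k, b (k+1) = Γ₂.mulVec (b k) := by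
    intro k
    simp only [hb]
    rw [pow_succ', ← Matrix.mulVec_mulVec]
  have hPa : ∀ k, P.mulVec (a k) = a k := by
    intro k
    induction k with
    | zero => rw [ha0, hx₀, Matrix.mulVec_mulVec, hPidem]
    | succ k ih => rw [haS, Matrix.mulVec_mulVec, hPΓ₁]
  have hPb : ∀ k, P.mulVec (b k) = 0 := by
    intro k
    induction k with
    | zero =>
        rw [hb0, hy₀, Matrix.mulVec_mulVec]
        have h : P * (1 - P) = 0 := by rw [mul_sub, mul_one, hPidem, sub_self]
        rw [h, Matrix.zero_mulVec]
    | succ k ih => rw [hbS, Matrix.mulVec_mulVec, hPΓ₂0, Matrix.zero_mulVec]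
  have hvab : ∀ k, v k = a k + b k := by
    intro k
    induction k with
    | zero =>
        rw [hv 0, pow_zero, Matrix.one_mulVec, ha0, hb0, hx₀, hy₀, ← Matrix.add_mulVec]
        simp
    | succ k ih =>
        have hveq : v (k+1) = M.mulVec (v k) := by
          rw [hv, hv, pow_succ', ← Matrix.mulVec_mulVec]
        have h1 : Γ₁.mulVec (b k) = 0 := by
          rw [← hΓ₁P, ← Matrix.mulVec_mulVec, hPb, Matrix.mulVec_zero]
        have h2 : Γ₂.mulVec (a k) = 0 := by
          rw [← hPa k, Matrix.mulVec_mulVec, hΓ₂P0, Matrix.zero_mulVec]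
        rw [hveq, ih, haS, hbS, hM, Matrix.add_mulVec, Matrix.mulVec_add, Matrix.mulVec_add,
          h1, h2]
        abel
  have hab : ∀ j k, a j ⬝ᵥ b k = 0 := by
    intro j k
    rw [← hPa j, mulVec_dot, hPt, hPb, dotProduct_zero]
  set A := x₀ ⬝ᵥ x₀ with hA
  have hA0 : 0 < A := by
    rw [hA, dot_self_eq]
    exact pow_pos (euclNorm_pos hproj) 2
  have haa : ∀ k, a k ⬝ᵥ a k = (σ^2)^k * A := by
    intro k
    induction k with
    | zero => simp [ha0, hA]
    | succ k ih =>
        rw [haS, mulVec_dot, Matrix.mulVec_mulVec, hΓ₁norm, Matrix.smul_mulVec,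
          dotProduct_smul, hPa, ih, smul_eq_mul]
        ring
  have hcross : ∀ k, (Γ₁.mulVec (a k)) ⬝ᵥ (a k) = σ * Real.cos ψ * ((σ^2)^k * A) := by
    intro k
    have e1 : a k ⬝ᵥ ((Γ₁ + Γ₁ᵀ).mulVec (a k)) = (2*σ*Real.cos ψ) * (a k ⬝ᵥ a k) := by
      rw [hΓ₁rot, Matrix.smul_mulVec, dotProduct_smul, hPa, smul_eq_mul]
    rw [Matrix.add_mulVec, dotProduct_add] at e1
    have e3 : a k ⬝ᵥ (Γ₁ᵀ.mulVec (a k)) = (Γ₁.mulVec (a k)) ⬝ᵥ (a k) := (mulVec_dot Γ₁ _ _).symm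
    have e4 : a k ⬝ᵥ (Γ₁.mulVec (a k)) = (Γ₁.mulVec (a k)) ⬝ᵥ (a k) := dotProduct_comm _ _
    rw [haa k] at e1
    linarith
  set B := (euclNorm y₀)^2 with hB
  have hB0 : 0 ≤ B := sq_nonneg _
  have hbn : ∀ k, euclNorm (b k) ≤ (η*σ)^k * euclNorm y₀ := by
    intro k
    induction k with
    | zero => simp [hb0]
    | succ k ih =>
        rw [hbS]
        calc euclNorm (Γ₂.mulVec (b k)) ≤ matOpNorm Γ₂ * euclNorm (b k) := euclNorm_mulVec_le _ _
          _ ≤ (η*σ) * ((η*σ)^k * euclNorm y₀) := by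
              apply mul_le_mul hΓ₂norm ih (euclNorm_nonneg _) (by positivity)
          _ = (η*σ)^(k+1) * euclNorm y₀ := by ring
  have hbb : ∀ k, b k ⬝ᵥ b k ≤ ((η*σ)^2)^k * B := by
    intro k
    rw [dot_self_eq]
    calc (euclNorm (b k))^2 ≤ ((η*σ)^k * euclNorm y₀)^2 :=
          pow_le_pow_left₀ (euclNorm_nonneg _) (hbn k) 2
      _ = ((η*σ)^2)^k * B := by rw [hB]; ring
  have hbb0 : ∀ k, 0 ≤ b k ⬝ᵥ b k := by
    intro k
    rw [dot_self_eq]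
    positivity
  have hvv : ∀ k, v k ⬝ᵥ v k = (σ^2)^k * A + b k ⬝ᵥ b k := by
    intro k
    rw [hvab, add_dotProduct, dotProduct_add, dotProduct_add, haa,
      hab k k, dotProduct_comm (b k) (a k), hab k k]
    ring
  have hvne : ∀ k, v k ≠ 0 := by
    intro k hk
    have h1 : v k ⬝ᵥ v k = 0 := by rw [hk]; simp
    rw [hvv k] at h1
    have h2 : 0 < (σ^2)^k * A := by positivity
    linarith [hbb0 k]
  have hvnorm : ∀ k, euclNorm (v k) = Real.sqrt ((σ^2)^k * A + b k ⬝ᵥ b k) := by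
    intro k
    rw [euclNorm_sqrt_dot, hvv]
  set C := (3*A*B + B^2)/(A^2*η^2) with hC
  have hC0 : 0 ≤ C := by positivity
  have hbound : ∀ k : ℕ, 1 ≤ k →
      |(v k ⬝ᵥ v (k - 1)) / (euclNorm (v k) * euclNorm (v (k - 1))) - Real.cos ψ|
        ≤ C * η ^ (2 * k) := by
    intro k hk
    obtain ⟨m, rfl⟩ : ∃ m, k = m + 1 := ⟨k-1, (Nat.succ_pred_eq_of_pos hk).symm⟩
    simp only [Nat.add_sub_cancel]
    set S := (σ^2)^m with hSdef
    set Q := (η^2)^m with hQdef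
    have hS0 : (0:ℝ) < S := by positivity
    have hQ0 : (0:ℝ) < Q := by positivity
    have hQ1 : Q ≤ 1 := by
      apply pow_le_one₀ (by positivity)
      nlinarith
    set E := b (m+1) ⬝ᵥ b m with hEdef
    set β₁ := b (m+1) ⬝ᵥ b (m+1) with hβ₁def
    set β₂ := b m ⬝ᵥ b m with hβ₂def
    have hnum : v (m+1) ⬝ᵥ v m = Real.cos ψ * (σ*S*A) + E := by
      rw [hvab (m+1), hvab m, add_dotProduct, dotProduct_add,
        dotProduct_add, hab (m+1) m, dotProduct_comm (b (m+1)) (a m),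
        hab m (m+1)]
      have h5 : a (m+1) ⬝ᵥ a m = σ * Real.cos ψ * (S * A) := by
        rw [haS]
        rw [hcross m]
      rw [h5]
      ring
    have hE : |E| ≤ Q*η*σ*S*B := by
      calc |E| ≤ euclNorm (b (m+1)) * euclNorm (b m) := abs_dot_le _ _
        _ ≤ ((η*σ)^(m+1) * euclNorm y₀) * ((η*σ)^m * euclNorm y₀) := by
            exact mul_le_mul (hbn _) (hbn _) (euclNorm_nonneg _)
              (mul_nonneg (by positivity) (euclNorm_nonneg _))
        _ = Q*η*σ*S*B := by
            rw [hQdef, hSdef, hB]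
            ring
    have hβ₁le : β₁ ≤ Q*η^2*σ^2*S*B := by
      calc β₁ ≤ ((η*σ)^2)^(m+1) * B := hbb (m+1)
        _ = Q*η^2*σ^2*S*B := by
            rw [hQdef, hSdef]
            ring
    have hβ₂le : β₂ ≤ Q*S*B := by
      calc β₂ ≤ ((η*σ)^2)^m * B := hbb m
        _ = Q*S*B := by
            rw [hQdef, hSdef]
            ring
    have hd : euclNorm (v (m+1)) * euclNorm (v m)
        = Real.sqrt (σ^2*S*A + β₁) * Real.sqrt (S*A + β₂) := by
      rw [hvnorm (m+1), hvnorm m]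
      congr 2
      rw [hSdef]
      ring
    have hkey := key_est_s2 σ η S Q A B (Real.cos ψ) E β₁ β₂
      (euclNorm (v (m+1)) * euclNorm (v m)) hσ0 hη0 hη1.le hS0 hQ0 hQ1 hA0 hB0
      (Real.abs_cos_le_one ψ) hE (hbb0 (m+1)) hβ₁le (hbb0 m) hβ₂le hd
    rw [hnum]
    have hCeq : C * η ^ (2*(m+1)) = Q*(3*A*B+B^2)/A^2 := by
      rw [hC, hQdef]
      field_simp
      ring
    rw [hCeq]
    exact hkey
  refine ⟨hvne, ⟨C, hC0, hbound⟩, ?_⟩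
  have hC_tend : Tendsto (fun k : ℕ => C * η^(2*k)) atTop (nhds 0) := by
    have h1 : Tendsto (fun k : ℕ => (η^2)^k) atTop (nhds 0) :=
      tendsto_pow_atTop_nhds_zero_of_lt_one (by positivity) (by nlinarith)
    have h2 := h1.const_mul C
    rw [mul_zero] at h2
    simpa [pow_mul] using h2
  have hg_tend : Tendsto
      (fun k => (v k ⬝ᵥ v (k-1)) / (euclNorm (v k) * euclNorm (v (k-1))))
      atTop (nhds (Real.cos ψ)) := by
    have hz : Tendsto
        (fun k => (v k ⬝ᵥ v (k-1)) / (euclNorm (v k) * euclNorm (v (k-1))) - Real.cos ψ)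
        atTop (nhds 0) := by
      apply squeeze_zero_norm' _ hC_tend
      filter_upwards [Filter.eventually_ge_atTop 1] with k hk
      simpa [Real.norm_eq_abs] using hbound k hk
    have h3 := hz.add_const (Real.cos ψ)
    simpa using h3
  have harccos := (Real.continuous_arccos.tendsto (Real.cos ψ)).comp hg_tend
  rw [Real.arccos_cos hψ0.le (by linarith [Real.pi_pos])] at harccos
  exact harccos
end

section
/- Let l, s > 0 and φ ∈ (0, π). For every nonzero x ∈ ℝ², the point x₊ = R_{l,s,φ} x is nonzero, and the angle χ = arccos(⟨x, x₊⟩/(‖x‖·‖x₊‖)) between x and x₊ satisfies χ_m ≤ χ ≤ χ_M; equivalently, (a cos φ − b)/√(sin²φ + (a cos φ − b)²) ≤ ⟨x, x₊⟩/(‖x‖·‖x₊‖) ≤ (a cos φ + b)/√(sin²φ + (a cos φ + b)²), where a = s/(2l) + l/(2s) and b = |s/(2l) − l/(2s)|. -/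
open Matrix

/-- The elliptical rotation matrix `R_{l,s,φ}`. -/
noncomputable def ellipRot (l s φ : ℝ) : Matrix (Fin 2) (Fin 2) ℝ :=
  !![Real.cos φ, (s / l) * Real.sin φ; -(l / s) * Real.sin φ, Real.cos φ]

private lemma myArccos_anti {x y : ℝ} (h : x ≤ y) : Real.arccos y ≤ Real.arccos x := by
  rw [Real.arccos_eq_pi_div_two_sub_arcsin, Real.arccos_eq_pi_div_two_sub_arcsin]
  have := Real.monotone_arcsin h
  linarith

private lemma myLeOfSq {p q : ℝ} (hp : 0 ≤ p) (h : q ^ 2 ≤ p ^ 2) : q ≤ p := by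
  nlinarith [sq_nonneg (p - q), sq_nonneg (p + q)]

private lemma myFmono {t m₁ m₂ : ℝ} (ht : 0 < t) (h : m₁ ≤ m₂) :
    m₁ / Real.sqrt (t ^ 2 + m₁ ^ 2) ≤ m₂ / Real.sqrt (t ^ 2 + m₂ ^ 2) := by
  have h1 : 0 < Real.sqrt (t ^ 2 + m₁ ^ 2) := Real.sqrt_pos.2 (by positivity)
  have h2 : 0 < Real.sqrt (t ^ 2 + m₂ ^ 2) := Real.sqrt_pos.2 (by positivity)
  have e1 : Real.sqrt (t ^ 2 + m₁ ^ 2) ^ 2 = t ^ 2 + m₁ ^ 2 := Real.sq_sqrt (by positivity)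
  have e2 : Real.sqrt (t ^ 2 + m₂ ^ 2) ^ 2 = t ^ 2 + m₂ ^ 2 := Real.sq_sqrt (by positivity)
  rw [div_le_div_iff₀ h1 h2]
  rcases le_or_gt 0 m₁ with hm1 | hm1
  · have hm2 : 0 ≤ m₂ := le_trans hm1 h
    apply myLeOfSq (by positivity)
    have : (m₁ * Real.sqrt (t ^ 2 + m₂ ^ 2)) ^ 2 = m₁ ^ 2 * (t ^ 2 + m₂ ^ 2) := by
      rw [mul_pow, e2]
    rw [this, mul_pow, e1]
    have hmm : m₁ ^ 2 ≤ m₂ ^ 2 := by nlinarith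
    nlinarith [mul_le_mul_of_nonneg_right hmm (sq_nonneg t)]
  · rcases le_or_gt 0 m₂ with hm2 | hm2
    · have : m₁ * Real.sqrt (t ^ 2 + m₂ ^ 2) ≤ 0 := mul_nonpos_of_nonpos_of_nonneg hm1.le h2.le
      exact le_trans this (by positivity)
    · have key : -(m₂ * Real.sqrt (t ^ 2 + m₁ ^ 2)) ≤ -(m₁ * Real.sqrt (t ^ 2 + m₂ ^ 2)) := by
        apply myLeOfSq
        · exact le_of_lt (by nlinarith)
        · have e3 : (-(m₂ * Real.sqrt (t ^ 2 + m₁ ^ 2))) ^ 2 = m₂ ^ 2 * (t ^ 2 + m₁ ^ 2) := by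
            rw [neg_pow, mul_pow, e1]; ring
          have e4 : (-(m₁ * Real.sqrt (t ^ 2 + m₂ ^ 2))) ^ 2 = m₁ ^ 2 * (t ^ 2 + m₂ ^ 2) := by
            rw [neg_pow, mul_pow, e2]; ring
          rw [e3, e4]
          have hmm : m₂ ^ 2 ≤ m₁ ^ 2 := by nlinarith
          nlinarith [mul_le_mul_of_nonneg_right hmm (sq_nonneg t)]
      linarith

private lemma myCoreUpper {a b c t X Y : ℝ} (ha2 : a ^ 2 = 1 + b ^ 2)
    (hct : c ^ 2 + t ^ 2 = 1) (hb0 : 0 ≤ b) (ha0 : 0 ≤ a) :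
    (X ^ 2 + Y ^ 2) * c + 2 * b * t * (X * Y)
      ≤ (a * c + b) * (a * (X ^ 2 + Y ^ 2) - b * (X ^ 2 - Y ^ 2)) := by
  have ha1 : 1 ≤ a := by nlinarith
  have hc2 : -1 ≤ c := by nlinarith [sq_nonneg (c + 1), sq_nonneg t]
  have hab : b ≤ a := by nlinarith
  have hp0 : 0 ≤ a + b * c := by nlinarith [mul_nonneg hb0 (by linarith : (0:ℝ) ≤ c + 1)]
  have hsq : ((a * c + b) * (X ^ 2 - Y ^ 2) + 2 * t * (X * Y)) ^ 2
      + (2 * (a * c + b) * (X * Y) - t * (X ^ 2 - Y ^ 2)) ^ 2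
      = ((a + b * c) * (X ^ 2 + Y ^ 2)) ^ 2 := by
    linear_combination (-((X ^ 2 + Y ^ 2) ^ 2 * (1 - c ^ 2))) * ha2 + (X ^ 2 + Y ^ 2) ^ 2 * hct
  have hB : (a * c + b) * (X ^ 2 - Y ^ 2) + 2 * t * (X * Y) ≤ (a + b * c) * (X ^ 2 + Y ^ 2) := by
    apply myLeOfSq (mul_nonneg hp0 (by positivity))
    nlinarith [sq_nonneg (2 * (a * c + b) * (X * Y) - t * (X ^ 2 - Y ^ 2))]
  have hfact : (a * c + b) * (a * (X ^ 2 + Y ^ 2) - b * (X ^ 2 - Y ^ 2))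
      - ((X ^ 2 + Y ^ 2) * c + 2 * b * t * (X * Y))
      = b * ((a + b * c) * (X ^ 2 + Y ^ 2)
        - ((a * c + b) * (X ^ 2 - Y ^ 2) + 2 * t * (X * Y))) := by
    linear_combination (c * (X ^ 2 + Y ^ 2)) * ha2
  nlinarith [mul_nonneg hb0 (sub_nonneg.2 hB)]

private lemma myCoreLower {a b c t X Y : ℝ} (ha2 : a ^ 2 = 1 + b ^ 2)
    (hct : c ^ 2 + t ^ 2 = 1) (hb0 : 0 ≤ b) (ha0 : 0 ≤ a) :
    (a * c - b) * (a * (X ^ 2 + Y ^ 2) - b * (X ^ 2 - Y ^ 2))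
      ≤ (X ^ 2 + Y ^ 2) * c + 2 * b * t * (X * Y) := by
  have ha1 : 1 ≤ a := by nlinarith
  have hc1 : c ≤ 1 := by nlinarith [sq_nonneg (c - 1), sq_nonneg t]
  have hab : b ≤ a := by nlinarith
  have hp0 : 0 ≤ a - b * c := by nlinarith [mul_nonneg hb0 (by linarith : (0:ℝ) ≤ 1 - c)]
  have hsq : (-((a * c - b) * (X ^ 2 - Y ^ 2) + 2 * t * (X * Y))) ^ 2
      + (2 * (a * c - b) * (X * Y) - t * (X ^ 2 - Y ^ 2)) ^ 2
      = ((a - b * c) * (X ^ 2 + Y ^ 2)) ^ 2 := by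
    linear_combination (-((X ^ 2 + Y ^ 2) ^ 2 * (1 - c ^ 2))) * ha2 + (X ^ 2 + Y ^ 2) ^ 2 * hct
  have hB : -((a * c - b) * (X ^ 2 - Y ^ 2) + 2 * t * (X * Y))
      ≤ (a - b * c) * (X ^ 2 + Y ^ 2) := by
    apply myLeOfSq (mul_nonneg hp0 (by positivity))
    nlinarith [sq_nonneg (2 * (a * c - b) * (X * Y) - t * (X ^ 2 - Y ^ 2))]
  have hfact : ((X ^ 2 + Y ^ 2) * c + 2 * b * t * (X * Y))
      - (a * c - b) * (a * (X ^ 2 + Y ^ 2) - b * (X ^ 2 - Y ^ 2))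
      = b * ((a - b * c) * (X ^ 2 + Y ^ 2)
        + ((a * c - b) * (X ^ 2 - Y ^ 2) + 2 * t * (X * Y))) := by
    linear_combination (-(c * (X ^ 2 + Y ^ 2))) * ha2
  nlinarith [mul_nonneg hb0 (sub_nonneg.2 hB)]

private lemma myBltA {a b : ℝ} (ha2 : a ^ 2 = 1 + b ^ 2) (hb0 : 0 ≤ b) (ha0 : 0 < a) :
    b < a := by nlinarith

private lemma myKpos {a b d X Y : ℝ} (h1 : d ≤ b) (h2 : -b ≤ d) (hab : b < a)
    (hr2 : 0 < X ^ 2 + Y ^ 2) : 0 < a * (X ^ 2 + Y ^ 2) - d * (X ^ 2 - Y ^ 2) := by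
  have h3 := mul_nonneg (by linarith : (0:ℝ) ≤ b - d) (sq_nonneg X)
  have h4 := mul_nonneg (by linarith : (0:ℝ) ≤ b + d) (sq_nonneg Y)
  have h5 := mul_pos (by linarith : (0:ℝ) < a - b) hr2
  nlinarith [h3, h4, h5]

private lemma myQpos {Q r2 : ℝ} (h6 : 0 < Q * r2) (hr2 : 0 < r2) : 0 < Q := by
  rcases mul_pos_iff.1 h6 with ⟨h7, _⟩ | ⟨_, h8⟩
  · exact h7
  · linarith

set_option maxHeartbeats 1000000 in
/-- Range of the angle between a point and its image under an elliptical rotation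
(Proposition on elliptical rotations, second item). -/
theorem ellipRot_angle_range
    (l s φ : ℝ) (hl : 0 < l) (hs : 0 < s) (hφ : φ ∈ Set.Ioo 0 Real.pi)
    (a b : ℝ)
    (ha : a = s / (2 * l) + l / (2 * s))
    (hb : b = |s / (2 * l) - l / (2 * s)|)
    (χM χm : ℝ)
    (hχM : χM = Real.arccos
      ((a * Real.cos φ - b) / Real.sqrt (Real.sin φ ^ 2 + (a * Real.cos φ - b) ^ 2)))
    (hχm : χm = Real.arccos
      ((a * Real.cos φ + b) / Real.sqrt (Real.sin φ ^ 2 + (a * Real.cos φ + b) ^ 2)))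
    (x : Fin 2 → ℝ) (hx : x ≠ 0)
    (xp : Fin 2 → ℝ) (hxp : xp = (ellipRot l s φ).mulVec x) :
    xp ≠ 0 ∧
    (χm ≤ Real.arccos ((x ⬝ᵥ xp) / (euclNorm x * euclNorm xp)) ∧
      Real.arccos ((x ⬝ᵥ xp) / (euclNorm x * euclNorm xp)) ≤ χM) ∧
    ((a * Real.cos φ - b) / Real.sqrt (Real.sin φ ^ 2 + (a * Real.cos φ - b) ^ 2)
        ≤ (x ⬝ᵥ xp) / (euclNorm x * euclNorm xp) ∧
      (x ⬝ᵥ xp) / (euclNorm x * euclNorm xp)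
        ≤ (a * Real.cos φ + b) / Real.sqrt (Real.sin φ ^ 2 + (a * Real.cos φ + b) ^ 2)) := by
  obtain ⟨X, hX⟩ : ∃ X, X = x 0 := ⟨_, rfl⟩
  obtain ⟨Y, hY⟩ : ∃ Y, Y = x 1 := ⟨_, rfl⟩
  obtain ⟨c, hc⟩ : ∃ c, c = Real.cos φ := ⟨_, rfl⟩
  obtain ⟨t, htdef⟩ : ∃ t, t = Real.sin φ := ⟨_, rfl⟩
  obtain ⟨d, hd⟩ : ∃ d, d = s / (2 * l) - l / (2 * s) := ⟨_, rfl⟩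
  have hl' := hl.ne'
  have hs' := hs.ne'
  have ht : 0 < t := htdef ▸ Real.sin_pos_of_pos_of_lt_pi hφ.1 hφ.2
  have hct : c ^ 2 + t ^ 2 = 1 := by rw [hc, htdef]; rw [add_comm]; exact Real.sin_sq_add_cos_sq φ
  have ha2 : a ^ 2 = 1 + d ^ 2 := by rw [ha, hd]; field_simp; ring
  have ha0 : 0 < a := by rw [ha]; positivity
  have hb' : b = |d| := by rw [hb, hd]
  have hb0 : 0 ≤ b := hb' ▸ abs_nonneg d
  have hbd2 : b ^ 2 = d ^ 2 := by rw [hb', sq_abs]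
  have hab : b < a := myBltA (by linarith [ha2, hbd2]) hb0 ha0
  have hsl : s / l = a + d := by rw [ha, hd]; field_simp; ring
  have hls : l / s = a - d := by rw [ha, hd]; field_simp; ring
  have hxp0 : xp 0 = c * X + (a + d) * t * Y := by
    rw [hxp, hX, hY, hc, htdef, ← hsl]
    simp [ellipRot, Matrix.mulVec, dotProduct, Fin.sum_univ_two]
  have hxp1 : xp 1 = -((a - d) * t) * X + c * Y := by
    rw [hxp, hX, hY, hc, htdef, ← hls]
    simp [ellipRot, Matrix.mulVec, dotProduct, Fin.sum_univ_two]
  have hN : x ⬝ᵥ xp = (X ^ 2 + Y ^ 2) * c + 2 * d * t * (X * Y) := by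
    simp only [dotProduct, Fin.sum_univ_two]
    rw [← hX, ← hY, hxp0, hxp1]; ring
  have hr2 : 0 < X ^ 2 + Y ^ 2 := by
    have : X ≠ 0 ∨ Y ≠ 0 := by
      by_contra hcon
      push_neg at hcon
      apply hx
      funext i
      fin_cases i
      · simpa [← hX] using hcon.1
      · simpa [← hY] using hcon.2
    rcases this with h | h
    · positivity
    · positivity
  obtain ⟨K, hK⟩ : ∃ K, K = a * (X ^ 2 + Y ^ 2) - d * (X ^ 2 - Y ^ 2) := ⟨_, rfl⟩
  have hKpos : 0 < K := by
    have h1 : d ≤ b := by rw [hb']; exact le_abs_self d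
    have h2 : -b ≤ d := by rw [hb']; exact neg_abs_le d
    rw [hK]; exact myKpos h1 h2 hab hr2
  -- key inequalities
  have hup : x ⬝ᵥ xp ≤ (a * c + b) * K := by
    rcases abs_cases d with ⟨h1, _⟩ | ⟨h1, _⟩
    · have hbdeq : b = d := by rw [hb', h1]
      rw [hN, hK, ← hbdeq]
      exact myCoreUpper (by rw [hbdeq]; exact ha2) hct hb0 ha0.le
    · have hbdeq : d = -b := by rw [hb', h1]; ring
      rw [hN, hK, hbdeq]
      have := myCoreUpper (a := a) (b := b) (c := c) (t := t) (X := -Y) (Y := X)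
        (by rw [hbdeq] at ha2; linarith) hct hb0 ha0.le
      linarith [this]
  have hlo : (a * c - b) * K ≤ x ⬝ᵥ xp := by
    rcases abs_cases d with ⟨h1, _⟩ | ⟨h1, _⟩
    · have hbdeq : b = d := by rw [hb', h1]
      rw [hN, hK, ← hbdeq]
      exact myCoreLower (by rw [hbdeq]; exact ha2) hct hb0 ha0.le
    · have hbdeq : d = -b := by rw [hb', h1]; ring
      rw [hN, hK, hbdeq]
      have := myCoreLower (a := a) (b := b) (c := c) (t := t) (X := -Y) (Y := X)
        (by rw [hbdeq] at ha2; linarith) hct hb0 ha0.le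
      linarith [this]
  -- norm of image
  obtain ⟨Q, hQ⟩ : ∃ Q, Q = xp 0 ^ 2 + xp 1 ^ 2 := ⟨_, rfl⟩
  have hQid : Q * (X ^ 2 + Y ^ 2) = (x ⬝ᵥ xp) ^ 2 + t ^ 2 * K ^ 2 := by
    rw [hQ, hxp0, hxp1, hN, hK]
    ring
  have hQpos : 0 < Q := by
    have h1 : 0 < t ^ 2 * K ^ 2 := by positivity
    have h6 : 0 < Q * (X ^ 2 + Y ^ 2) := by
      rw [hQid]; exact lt_of_lt_of_le h1 (by linarith [sq_nonneg (x ⬝ᵥ xp)])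
    exact myQpos h6 hr2
  have hxpne : xp ≠ 0 := by
    intro h
    rw [h] at hQ
    simp at hQ
    exact absurd hQ (by linarith)
  -- norms
  have hnx : euclNorm x = Real.sqrt (X ^ 2 + Y ^ 2) := by
    simp [euclNorm, Fin.sum_univ_two, ← hX, ← hY]
  have hnxp : euclNorm xp = Real.sqrt Q := by
    simp [euclNorm, Fin.sum_univ_two, hQ]
  -- the ratio
  have hratio : (x ⬝ᵥ xp) / (euclNorm x * euclNorm xp)
      = (x ⬝ᵥ xp / K) / Real.sqrt (t ^ 2 + (x ⬝ᵥ xp / K) ^ 2) := by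
    have h1 : euclNorm x * euclNorm xp = Real.sqrt ((x ⬝ᵥ xp) ^ 2 + t ^ 2 * K ^ 2) := by
      rw [hnx, hnxp, ← Real.sqrt_mul hr2.le, mul_comm (X ^ 2 + Y ^ 2) Q, hQid]
    have h2 : t ^ 2 + (x ⬝ᵥ xp / K) ^ 2 = ((x ⬝ᵥ xp) ^ 2 + t ^ 2 * K ^ 2) / K ^ 2 := by
      field_simp
      ring
    have hS : 0 < Real.sqrt ((x ⬝ᵥ xp) ^ 2 + t ^ 2 * K ^ 2) := by
      apply Real.sqrt_pos.2
      linarith [sq_nonneg (x ⬝ᵥ xp), mul_pos (pow_pos ht 2) (pow_pos hKpos 2)]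
    rw [h1, h2, Real.sqrt_div (by positivity), Real.sqrt_sq hKpos.le]
    field_simp
  have hm1 : a * c - b ≤ x ⬝ᵥ xp / K := (le_div_iff₀ hKpos).2 hlo
  have hm2 : x ⬝ᵥ xp / K ≤ a * c + b := (div_le_iff₀ hKpos).2 hup
  have key1 : (a * c - b) / Real.sqrt (t ^ 2 + (a * c - b) ^ 2)
      ≤ (x ⬝ᵥ xp) / (euclNorm x * euclNorm xp) := by
    rw [hratio]; exact myFmono ht hm1
  have key2 : (x ⬝ᵥ xp) / (euclNorm x * euclNorm xp)
      ≤ (a * c + b) / Real.sqrt (t ^ 2 + (a * c + b) ^ 2) := by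
    rw [hratio]; exact myFmono ht hm2
  rw [← hc, ← htdef] at hχM hχm ⊢
  refine ⟨hxpne, ⟨?_, ?_⟩, key1, key2⟩
  · rw [hχm]; exact myArccos_anti key2
  · rw [hχM]; exact myArccos_anti key1
end

section
/- Let F : ℝⁿ → ℝⁿ be α-averaged nonexpansive for some α ∈ (0,1), i.e., F = α F' + (1 − α) Id for some nonexpansive (1-Lipschitz) map F' : ℝⁿ → ℝⁿ, and suppose the fixed-point set Fix(F) = {z : F(z) = z} is nonempty. Let (ε_k)_{k≥0} ⊂ ℝⁿ be a sequence of perturbations with Σ_k ‖ε_k‖ < ∞, and define the perturbed fixed-point iteration z_{k+1} = F(z_k + ε_k) from an arbitrary z₀ ∈ ℝⁿ. Then there exists z* ∈ Fix(F) such that z_k → z*. -/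
set_option maxHeartbeats 1000000
open Filter Topology

lemma aux_norm_combo_sq {E : Type*} [NormedAddCommGroup E] [InnerProductSpace ℝ E]
    (α : ℝ) (a b : E) :
    ‖(1-α) • a + α • b‖^2 = (1-α)*‖a‖^2 + α*‖b‖^2 - α*(1-α)*‖a-b‖^2 := by
  simp only [← real_inner_self_eq_norm_sq, inner_add_left, inner_add_right,
    inner_sub_left, inner_sub_right, real_inner_smul_left, real_inner_smul_right]
  rw [real_inner_comm b a]
  ring

lemma aux_quasi_fejer (a e : ℕ → ℝ) (ha : ∀ k, 0 ≤ a k) (hen : ∀ k, 0 ≤ e k)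
    (he : Summable e) (hstep : ∀ k, a (k+1) ≤ a k + e k) :
    ∃ L, Tendsto a atTop (𝓝 L) := by
  set t : ℕ → ℝ := fun k => ∑ j ∈ Finset.range k, e j with ht
  have hg : Antitone (fun k => a k - t k) := by
    apply antitone_nat_of_succ_le
    intro k
    have := hstep k
    simp only [ht, Finset.sum_range_succ]
    linarith
  have hbdd : BddBelow (Set.range fun k => a k - t k) := by
    refine ⟨-(∑' j, e j), ?_⟩
    rintro x ⟨k, rfl⟩
    have h1 : t k ≤ ∑' j, e j := Summable.sum_le_tsum _ (fun j _ => hen j) he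
    have := ha k
    simp only
    linarith
  have h1 : Tendsto (fun k => a k - t k) atTop (𝓝 (⨅ k, a k - t k)) :=
    tendsto_atTop_ciInf hg hbdd
  have h2 : Tendsto t atTop (𝓝 (∑' j, e j)) := he.hasSum.tendsto_sum_nat
  exact ⟨_, by simpa using h1.add h2⟩

/-- Global convergence of the perturbed fixed-point iteration (A²FoM as an inexact
Krasnosel'skii–Mann iteration): if `F` is `α`-averaged nonexpansive on `ℝⁿ` with a
fixed point, and the perturbations `ε_k` are absolutely summable, then the iterates
`z_{k+1} = F(z_k + ε_k)` converge to some fixed point of `F`. -/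
theorem perturbed_averaged_iteration_converges
    (n : ℕ) (α : ℝ) (hα : α ∈ Set.Ioo (0 : ℝ) 1)
    (F F' : EuclideanSpace ℝ (Fin n) → EuclideanSpace ℝ (Fin n))
    (hF' : LipschitzWith 1 F')
    (hF : ∀ x, F x = α • F' x + (1 - α) • x)
    (hfix : ∃ z, F z = z)
    (ε : ℕ → EuclideanSpace ℝ (Fin n))
    (hε : Summable fun k => ‖ε k‖)
    (z : ℕ → EuclideanSpace ℝ (Fin n))
    (hz : ∀ k, z (k + 1) = F (z k + ε k)) :
    ∃ zstar, F zstar = zstar ∧ Tendsto z atTop (nhds zstar) := by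
  obtain ⟨hα0, hα1⟩ := hα
  obtain ⟨zb, hzb⟩ := hfix
  set e : ℕ → ℝ := fun k => ‖ε k‖ with he_def
  have hen : ∀ k, 0 ≤ e k := fun k => norm_nonneg _
  have hF'ne : ∀ x y, ‖F' x - F' y‖ ≤ ‖x - y‖ := by
    intro x y
    have := hF'.dist_le_mul x y
    simpa [dist_eq_norm] using this
  -- F' fixes zb
  have hF'zb : F' zb = zb := by
    have h := hF zb
    rw [hzb] at h
    have h2 : α • F' zb = α • zb := by
      have h3 : α • F' zb = zb - (1-α) • zb := eq_sub_of_add_eq h.symm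
      rw [h3, sub_smul, one_smul, sub_sub_cancel]
    exact smul_right_injective _ (ne_of_gt hα0) h2
  -- nonexpansiveness of F
  have hFne : ∀ x y, ‖F x - F y‖ ≤ ‖x - y‖ := by
    intro x y
    have h1 : F x - F y = α • (F' x - F' y) + (1-α) • (x - y) := by
      rw [hF x, hF y]; simp only [smul_sub]; abel
    rw [h1]
    calc ‖α • (F' x - F' y) + (1-α) • (x - y)‖
        ≤ ‖α • (F' x - F' y)‖ + ‖(1-α) • (x - y)‖ := norm_add_le _ _
      _ = α * ‖F' x - F' y‖ + (1-α) * ‖x - y‖ := by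
          rw [norm_smul, norm_smul, Real.norm_eq_abs, Real.norm_eq_abs,
            abs_of_pos hα0, abs_of_pos (by linarith)]
      _ ≤ α * ‖x - y‖ + (1-α) * ‖x - y‖ := by
          have := hF'ne x y
          nlinarith
      _ = ‖x - y‖ := by ring
  -- key inequality at any fixed point w of F'
  have keyineq : ∀ (w : EuclideanSpace ℝ (Fin n)), F' w = w → ∀ x,
      ‖F x - w‖^2 ≤ ‖x - w‖^2 - α*(1-α)*‖x - F' x‖^2 := by
    intro w hw x
    have h1 : F x - w = (1-α) • (x - w) + α • (F' x - w) := by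
      rw [hF x]
      simp only [smul_sub, sub_smul, one_smul]
      abel
    have h2 : (x - w) - (F' x - w) = x - F' x := by abel
    have h3 := aux_norm_combo_sq α (x - w) (F' x - w)
    rw [h2] at h3
    rw [h1, h3]
    have h4 : ‖F' x - w‖ ≤ ‖x - w‖ := by
      calc ‖F' x - w‖ = ‖F' x - F' w‖ := by rw [hw]
        _ ≤ ‖x - w‖ := hF'ne x w
    have h5 : ‖F' x - w‖^2 ≤ ‖x - w‖^2 := pow_le_pow_left₀ (norm_nonneg _) h4 2
    nlinarith [mul_le_mul_of_nonneg_left h5 hα0.le]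
  -- basic sequences
  set w : ℕ → EuclideanSpace ℝ (Fin n) := fun k => z k + ε k with hw_def
  set a : ℕ → ℝ := fun k => ‖z k - zb‖ with ha_def
  have hwznorm : ∀ k, ‖w k - zb‖ ≤ a k + e k := by
    intro k
    have h1 : w k - zb = (z k - zb) + ε k := by simp only [hw_def]; abel
    rw [h1]; exact norm_add_le _ _
  have hstep : ∀ k, a (k+1) ≤ a k + e k := by
    intro k
    calc a (k+1) = ‖F (w k) - F zb‖ := by rw [ha_def]; simp [hz k, hzb, hw_def]
      _ ≤ ‖w k - zb‖ := hFne _ _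
      _ ≤ a k + e k := hwznorm k
  set S : ℝ := ∑' j, e j with hS_def
  have hS0 : 0 ≤ S := tsum_nonneg hen
  have heS : ∀ k, e k ≤ S := fun k => Summable.le_tsum hε k (fun j _ => hen j)
  set M : ℝ := a 0 + S with hM_def
  have haM : ∀ k, a k ≤ M := by
    intro k
    have : ∀ k, a k ≤ a 0 + ∑ j ∈ Finset.range k, e j := by
      intro k
      induction k with
      | zero => simp
      | succ m ih =>
        have := hstep m
        rw [Finset.sum_range_succ]
        linarith
    have h2 : ∑ j ∈ Finset.range k, e j ≤ S := Summable.sum_le_tsum _ (fun j _ => hen j) hε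
    have := this k
    rw [hM_def]
    linarith
  have han : ∀ k, 0 ≤ a k := fun k => norm_nonneg _
  -- residual r at w k is square-summable
  set r : ℕ → ℝ := fun k => ‖w k - F' (w k)‖ with hr_def
  have hsq : ∀ k, α*(1-α) * r k^2 ≤ ‖w k - zb‖^2 - a (k+1)^2 := by
    intro k
    have h1 := keyineq zb hF'zb (w k)
    have h2 : a (k+1) = ‖F (w k) - zb‖ := by rw [ha_def]; simp [hz k, hw_def]
    rw [h2]
    linarith
  have hsum_bound : ∀ N, ∑ k ∈ Finset.range N, α*(1-α)*r k^2 ≤ a 0^2 + (2*M+S)*S := by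
    intro N
    have hterm : ∀ k, α*(1-α)*r k^2 ≤ (a k^2 - a (k+1)^2) + (2*M+S)*e k := by
      intro k
      have h1 := hsq k
      have h2 : ‖w k - zb‖^2 ≤ (a k + e k)^2 := by
        have := hwznorm k
        nlinarith [norm_nonneg (w k - zb)]
      have h3 : (a k + e k)^2 ≤ a k^2 + (2*M+S)*e k := by
        have := haM k; have := heS k; have := hen k; have := han k
        nlinarith
      linarith
    calc ∑ k ∈ Finset.range N, α*(1-α)*r k^2
        ≤ ∑ k ∈ Finset.range N, ((a k^2 - a (k+1)^2) + (2*M+S)*e k) :=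
          Finset.sum_le_sum (fun k _ => hterm k)
      _ = (a 0^2 - a N^2) + (2*M+S) * ∑ k ∈ Finset.range N, e k := by
          rw [Finset.sum_add_distrib, Finset.sum_range_sub' (fun k => a k^2), ← Finset.mul_sum]
      _ ≤ a 0^2 + (2*M+S)*S := by
          have h1 : ∑ k ∈ Finset.range N, e k ≤ S := Summable.sum_le_tsum _ (fun j _ => hen j) hε
          have h2 : 0 ≤ a N^2 := sq_nonneg _
          have h3 : 0 ≤ 2*M+S := by
            have := haM 0; have := han 0; rw [hM_def]; linarith
          nlinarith
  have hrsummable : Summable (fun k => α*(1-α)*r k^2) := by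
    apply summable_of_sum_range_le (fun k => ?_) hsum_bound
    have : 0 < α*(1-α) := mul_pos hα0 (by linarith)
    positivity
  have hrsq0 : Tendsto (fun k => α*(1-α)*r k^2) atTop (𝓝 0) := hrsummable.tendsto_atTop_zero
  have hr0 : Tendsto r atTop (𝓝 0) := by
    have hc : (0:ℝ) < α*(1-α) := mul_pos hα0 (by linarith)
    have h1 : Tendsto (fun k => r k^2) atTop (𝓝 0) := by
      have hs2 : Summable (fun k => r k^2) :=
        (summable_mul_left_iff hc.ne').mp hrsummable
      exact hs2.tendsto_atTop_zero
    have h2 : Tendsto (fun k => Real.sqrt (r k^2)) atTop (𝓝 (Real.sqrt 0)) :=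
      (Real.continuous_sqrt.tendsto 0).comp h1
    simpa [Real.sqrt_sq (norm_nonneg _), hr_def] using h2
  have he0 : Tendsto e atTop (𝓝 0) := hε.tendsto_atTop_zero
  -- residual at z k tends to 0
  have hres_le : ∀ k, ‖z k - F' (z k)‖ ≤ r k + 2 * e k := by
    intro k
    have h1 : z k - F' (z k) = (-(ε k)) + (w k - F' (w k)) + (F' (w k) - F' (z k)) := by
      simp only [hw_def]; abel
    have h2 : ‖F' (w k) - F' (z k)‖ ≤ e k := by
      have := hF'ne (w k) (z k)
      simpa [hw_def] using this
    calc ‖z k - F' (z k)‖ = ‖(-(ε k)) + (w k - F' (w k)) + (F' (w k) - F' (z k))‖ := by rw [h1]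
      _ ≤ ‖(-(ε k)) + (w k - F' (w k))‖ + ‖F' (w k) - F' (z k)‖ := norm_add_le _ _
      _ ≤ ‖(-(ε k))‖ + ‖w k - F' (w k)‖ + ‖F' (w k) - F' (z k)‖ := by
          have := norm_add_le (-(ε k)) (w k - F' (w k)); linarith
      _ ≤ r k + 2 * e k := by rw [norm_neg]; simp only [hr_def, he_def]; linarith
  have hres0 : Tendsto (fun k => ‖z k - F' (z k)‖) atTop (𝓝 0) := by
    have hlim : Tendsto (fun k => r k + 2 * e k) atTop (𝓝 0) := by
      have := hr0.add ((he0.const_mul 2))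
      simpa using this
    exact squeeze_zero (fun k => norm_nonneg _) hres_le hlim
  -- boundedness, extract convergent subsequence
  have hmem : ∀ k, z k ∈ Metric.closedBall zb M := by
    intro k
    rw [Metric.mem_closedBall, dist_eq_norm]
    exact haM k
  obtain ⟨zs, -, φ, hφ, hconv⟩ :=
    tendsto_subseq_of_bounded Metric.isBounded_closedBall hmem
  -- zs is a fixed point of F'
  have hcont : Continuous fun x : EuclideanSpace ℝ (Fin n) => ‖x - F' x‖ :=
    (continuous_id.sub hF'.continuous).norm
  have hF'zs : F' zs = zs := by
    have h1 : Tendsto (fun j => ‖z (φ j) - F' (z (φ j))‖) atTop (𝓝 ‖zs - F' zs‖) :=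
      (hcont.tendsto zs).comp hconv
    have h2 : Tendsto (fun j => ‖z (φ j) - F' (z (φ j))‖) atTop (𝓝 0) :=
      hres0.comp hφ.tendsto_atTop
    have h3 : ‖zs - F' zs‖ = 0 := tendsto_nhds_unique h1 h2
    have h4 : zs - F' zs = 0 := norm_eq_zero.mp h3
    exact (sub_eq_zero.mp h4).symm
  have hFzs : F zs = zs := by
    rw [hF zs, hF'zs, ← add_smul]
    simp
  -- quasi-Fejér with zs
  have hstep' : ∀ k, ‖z (k+1) - zs‖ ≤ ‖z k - zs‖ + e k := by
    intro k
    calc ‖z (k+1) - zs‖ = ‖F (w k) - F zs‖ := by rw [hz k, hFzs, hw_def]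
      _ ≤ ‖w k - zs‖ := hFne _ _
      _ ≤ ‖z k - zs‖ + e k := by
          have h1 : w k - zs = (z k - zs) + ε k := by simp only [hw_def]; abel
          rw [h1]; exact norm_add_le _ _
  obtain ⟨L, hL⟩ := aux_quasi_fejer (fun k => ‖z k - zs‖) e (fun k => norm_nonneg _)
    hen hε hstep'
  have hLsub : Tendsto (fun j => ‖z (φ j) - zs‖) atTop (𝓝 L) := hL.comp hφ.tendsto_atTop
  have hLsub0 : Tendsto (fun j => ‖z (φ j) - zs‖) atTop (𝓝 0) := by
    have := (tendsto_iff_norm_sub_tendsto_zero.mp hconv)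
    simpa using this
  have hL0 : L = 0 := tendsto_nhds_unique hLsub hLsub0
  rw [hL0] at hL
  exact ⟨zs, hFzs, tendsto_iff_norm_sub_tendsto_zero.mpr hL⟩
end

section
/- Let M be a real n×n matrix, C a real q×q matrix, and (V_j)_{j≥0}, (F_j)_{j≥0} sequences of real n×q matrices satisfying V_{j+1} = M V_j + F_j for all j ≥ 0. Fix k ≥ 1 and define E₀ = V_{k−1} C − V_k and E_ℓ = V_k C^ℓ − V_{k+ℓ} for ℓ ≥ 1. Then for every ℓ ≥ 1: E_ℓ = −Σ_{j=0}^{ℓ−1} M^{ℓ−1−j} F_{k+j} + Σ_{j=1}^{ℓ} M^j E₀ C^{ℓ−j} + Σ_{j=1}^{ℓ} M^{ℓ−j} F_{k−1} C^j. -/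
/-- Error propagation identity for the trajectory-following linear prediction:
`E_ℓ = V_k C^ℓ − V_{k+ℓ}` in terms of `E₀ = V_{k−1} C − V_k` and the residuals `F_j`. -/
theorem linear_prediction_error_identity
    (n q : ℕ) (M : Matrix (Fin n) (Fin n) ℝ) (C : Matrix (Fin q) (Fin q) ℝ)
    (V F : ℕ → Matrix (Fin n) (Fin q) ℝ)
    (hV : ∀ j, V (j + 1) = M * V j + F j)
    (k : ℕ) (hk : 1 ≤ k)
    (E₀ : Matrix (Fin n) (Fin q) ℝ) (hE₀ : E₀ = V (k - 1) * C - V k) :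
    ∀ ℓ : ℕ, 1 ≤ ℓ →
      V k * C ^ ℓ - V (k + ℓ) =
        -(∑ j ∈ Finset.range ℓ, M ^ (ℓ - 1 - j) * F (k + j))
          + ∑ j ∈ Finset.Icc 1 ℓ, M ^ j * E₀ * C ^ (ℓ - j)
          + ∑ j ∈ Finset.Icc 1 ℓ, M ^ (ℓ - j) * F (k - 1) * C ^ j := by
  have hVk : V k = M * V (k - 1) + F (k - 1) := by
    have h := hV (k - 1)
    rwa [Nat.sub_add_cancel hk] at h
  -- recursion for the error
  have hrec : ∀ ℓ : ℕ, V k * C ^ (ℓ + 1) - V (k + (ℓ + 1)) =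
      M * (V k * C ^ ℓ - V (k + ℓ)) + M * E₀ * C ^ ℓ
        + F (k - 1) * C ^ (ℓ + 1) - F (k + ℓ) := by
    intro ℓ
    have h1 : V (k + (ℓ + 1)) = M * V (k + ℓ) + F (k + ℓ) := by
      have h := hV (k + ℓ); rwa [Nat.add_assoc] at h
    have h2 : V k * C = M * E₀ + M * (V k) + F (k - 1) * C := by
      rw [hE₀, hVk]
      simp only [Matrix.mul_sub, Matrix.mul_add, Matrix.add_mul, Matrix.mul_assoc]
      abel
    calc V k * C ^ (ℓ + 1) - V (k + (ℓ + 1))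
        = (V k * C) * C ^ ℓ - (M * V (k + ℓ) + F (k + ℓ)) := by
          rw [h1, pow_succ', ← Matrix.mul_assoc]
      _ = (M * E₀ + M * (V k) + F (k - 1) * C) * C ^ ℓ
            - (M * V (k + ℓ) + F (k + ℓ)) := by rw [h2]
      _ = M * (V k * C ^ ℓ - V (k + ℓ)) + M * E₀ * C ^ ℓ
            + F (k - 1) * (C * C ^ ℓ) - F (k + ℓ) := by
          rw [Matrix.add_mul, Matrix.add_mul, Matrix.mul_sub,
            Matrix.mul_assoc M (V k), Matrix.mul_assoc (F (k-1)) C]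
          abel
      _ = M * (V k * C ^ ℓ - V (k + ℓ)) + M * E₀ * C ^ ℓ
            + F (k - 1) * C ^ (ℓ + 1) - F (k + ℓ) := by rw [pow_succ']
  -- range-indexed version, valid for all ℓ (including 0)
  have key : ∀ ℓ : ℕ,
      V k * C ^ ℓ - V (k + ℓ) =
        -(∑ j ∈ Finset.range ℓ, M ^ (ℓ - 1 - j) * F (k + j))
          + ∑ j ∈ Finset.range ℓ, M ^ (1 + j) * E₀ * C ^ (ℓ - (1 + j))
          + ∑ j ∈ Finset.range ℓ, M ^ (ℓ - (1 + j)) * F (k - 1) * C ^ (1 + j) := by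
    intro ℓ
    induction ℓ with
    | zero => simp
    | succ m ih =>
        rw [hrec m, ih]
        have hA : ∑ j ∈ Finset.range (m + 1), M ^ (m + 1 - 1 - j) * F (k + j)
            = M * (∑ j ∈ Finset.range m, M ^ (m - 1 - j) * F (k + j)) + F (k + m) := by
          rw [Finset.sum_range_succ, Matrix.mul_sum]
          congr 1
          · refine Finset.sum_congr rfl fun j hj => ?_
            have hj' : j < m := Finset.mem_range.mp hj
            have h : m + 1 - 1 - j = (m - 1 - j) + 1 := by omega
            rw [h, pow_succ', Matrix.mul_assoc]
          · simp
        have hB : ∑ j ∈ Finset.range (m + 1), M ^ (1 + j) * E₀ * C ^ (m + 1 - (1 + j))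
            = M * (∑ j ∈ Finset.range m, M ^ (1 + j) * E₀ * C ^ (m - (1 + j)))
              + M * E₀ * C ^ m := by
          rw [Finset.sum_range_succ', Matrix.mul_sum]
          congr 1
          · refine Finset.sum_congr rfl fun j hj => ?_
            rw [show (1 + (j + 1)) = (1 + j) + 1 from by omega]
            rw [show m + 1 - ((1 + j) + 1) = m - (1 + j) from by omega]
            rw [pow_succ']
            simp [Matrix.mul_assoc]
          · norm_num
        have hD : ∑ j ∈ Finset.range (m + 1), M ^ (m + 1 - (1 + j)) * F (k - 1) * C ^ (1 + j)
            = M * (∑ j ∈ Finset.range m, M ^ (m - (1 + j)) * F (k - 1) * C ^ (1 + j))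
              + F (k - 1) * C ^ (m + 1) := by
          rw [Finset.sum_range_succ, Matrix.mul_sum]
          congr 1
          · refine Finset.sum_congr rfl fun j hj => ?_
            have hj' : j < m := Finset.mem_range.mp hj
            have h : m + 1 - (1 + j) = (m - (1 + j)) + 1 := by omega
            rw [h, pow_succ']
            simp [Matrix.mul_assoc]
          · have h : m + 1 - (1 + m) = 0 := by omega
            rw [h, pow_zero, Matrix.one_mul, show 1 + m = m + 1 from Nat.add_comm 1 m]
        rw [hA, hB, hD, Matrix.mul_add, Matrix.mul_add, Matrix.mul_neg, pow_succ]
        abel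
  intro ℓ hℓ
  have hIcc1 : ∑ j ∈ Finset.Icc 1 ℓ, M ^ j * E₀ * C ^ (ℓ - j)
      = ∑ j ∈ Finset.range ℓ, M ^ (1 + j) * E₀ * C ^ (ℓ - (1 + j)) := by
    rw [← Finset.Ico_add_one_right_eq_Icc, Finset.sum_Ico_eq_sum_range]
    simp
  have hIcc2 : ∑ j ∈ Finset.Icc 1 ℓ, M ^ (ℓ - j) * F (k - 1) * C ^ j
      = ∑ j ∈ Finset.range ℓ, M ^ (ℓ - (1 + j)) * F (k - 1) * C ^ (1 + j) := by
    rw [← Finset.Ico_add_one_right_eq_Icc, Finset.sum_Ico_eq_sum_range]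
    simp
  rw [hIcc1, hIcc2, key ℓ]
end

section
/- Let q ≥ 1 and c ∈ ℝ^q with Σ_{ℓ=1}^{q} c_ℓ ≠ 1. Then the matrix I − H(c) is invertible, and for all 1 ≤ i, j ≤ q the (i,j) entry of (I − H(c))⁻¹ equals (Σ_{ℓ=i}^{q} c_ℓ)/(1 − Σ_{ℓ=1}^{q} c_ℓ) if j < i, and (1 − Σ_{ℓ=1}^{i−1} c_ℓ)/(1 − Σ_{ℓ=1}^{q} c_ℓ) if j ≥ i. In particular, the (1,1) entry of (I − H(c))⁻¹ is 1/(1 − Σ_{ℓ=1}^{q} c_ℓ). -/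
open Matrix

/-- The companion-type matrix `H(c)`: first column `c`, and the `(i,j)` entry for `j ≥ 2`
equals `1` if `i = j − 1` and `0` otherwise. -/
def Hmat {q : ℕ} (c : Fin q → ℝ) : Matrix (Fin q) (Fin q) ℝ :=
  Matrix.of fun i j => if (j : ℕ) = 0 then c i else if (i : ℕ) + 1 = (j : ℕ) then 1 else 0

/-- Closed form of `(I − H(c))⁻¹` (used for the infinite-step linear prediction and its
equivalence with minimal polynomial extrapolation): when `∑ c_ℓ ≠ 1` the matrix
`I − H(c)` is invertible, with inverse entries `(∑_{ℓ≥i} c_ℓ)/(1 − ∑ c_ℓ)` below the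
diagonal block and `(1 − ∑_{ℓ<i} c_ℓ)/(1 − ∑ c_ℓ)` otherwise; in particular the `(1,1)`
entry of the inverse is `1/(1 − ∑ c_ℓ)`. -/
theorem one_sub_Hmat_inverse
    (q : ℕ) (hq : 1 ≤ q) (c : Fin q → ℝ)
    (hc : ∑ ℓ, c ℓ ≠ 1) :
    IsUnit (1 - Hmat c) ∧
    (∀ i j : Fin q, (1 - Hmat c)⁻¹ i j =
      if (j : ℕ) < (i : ℕ) then
        (∑ ℓ ∈ Finset.univ.filter (fun ℓ : Fin q => (i : ℕ) ≤ (ℓ : ℕ)), c ℓ)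
          / (1 - ∑ ℓ, c ℓ)
      else
        (1 - ∑ ℓ ∈ Finset.univ.filter (fun ℓ : Fin q => (ℓ : ℕ) < (i : ℕ)), c ℓ)
          / (1 - ∑ ℓ, c ℓ)) ∧
    (1 - Hmat c)⁻¹ (⟨0, hq⟩ : Fin q) (⟨0, hq⟩ : Fin q) = 1 / (1 - ∑ ℓ, c ℓ) := by
  classical
  set s : ℝ := ∑ ℓ, c ℓ with hs
  have hd : (1 : ℝ) - s ≠ 0 := sub_ne_zero.mpr (Ne.symm hc)
  set T : ℕ → ℝ := fun m => ∑ ℓ ∈ Finset.univ.filter (fun ℓ : Fin q => (ℓ : ℕ) < m), c ℓ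
    with hTdef
  set U : ℕ → ℝ := fun m => ∑ ℓ ∈ Finset.univ.filter (fun ℓ : Fin q => m ≤ (ℓ : ℕ)), c ℓ
    with hUdef
  set B : Matrix (Fin q) (Fin q) ℝ := Matrix.of fun i j =>
    if (j : ℕ) < (i : ℕ) then U (i : ℕ) / (1 - s) else (1 - T (i : ℕ)) / (1 - s) with hB
  have hsplit : ∀ m : ℕ, T m + U m = s := by
    intro m
    have := Finset.sum_filter_add_sum_filter_not Finset.univ
      (fun ℓ : Fin q => (ℓ : ℕ) < m) c
    simpa [hTdef, hUdef, not_lt, hs] using this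
  have hU1 : ∀ i : Fin q, U (i : ℕ) = c i + U ((i : ℕ) + 1) := by
    intro i
    have hfe : Finset.univ.filter (fun ℓ : Fin q => (i : ℕ) ≤ (ℓ : ℕ))
        = insert i (Finset.univ.filter (fun ℓ : Fin q => (i : ℕ) + 1 ≤ (ℓ : ℕ))) := by
      ext ℓ
      simp only [Finset.mem_filter, Finset.mem_insert, Finset.mem_univ, true_and,
        Fin.ext_iff]
      omega
    simp only [hUdef]
    rw [hfe, Finset.sum_insert (by simp)]
  have hT1 : ∀ i : Fin q, T ((i : ℕ) + 1) = T (i : ℕ) + c i := by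
    intro i
    have hfe : Finset.univ.filter (fun ℓ : Fin q => (ℓ : ℕ) < (i : ℕ) + 1)
        = insert i (Finset.univ.filter (fun ℓ : Fin q => (ℓ : ℕ) < (i : ℕ))) := by
      ext ℓ
      simp only [Finset.mem_filter, Finset.mem_insert, Finset.mem_univ, true_and,
        Fin.ext_iff]
      omega
    simp only [hTdef]
    rw [hfe, Finset.sum_insert (by simp), add_comm]
  have hT0 : T 0 = 0 := by
    simp [hTdef]
  have hUtop : U q = 0 := by
    have : Finset.univ.filter (fun ℓ : Fin q => q ≤ (ℓ : ℕ)) = ∅ := by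
      ext ℓ
      simp only [Finset.mem_filter, Finset.mem_univ, true_and, Finset.notMem_empty,
        iff_false, not_le]
      exact ℓ.isLt
    simp [hUdef, this]
  have hB00 : ∀ k : Fin q, B ⟨0, hq⟩ k = 1 / (1 - s) := by
    intro k
    have h0 : ¬ ((k : ℕ) < ((⟨0, hq⟩ : Fin q) : ℕ)) := Nat.not_lt_zero _
    simp only [hB, Matrix.of_apply, if_neg h0, hT0, sub_zero]
  have hmul : (1 - Hmat c) * B = 1 := by
    ext i k
    rw [Matrix.mul_apply]
    have hsummand : ∀ j : Fin q, (1 - Hmat c) i j * B j k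
        = (if i = j then B j k else 0)
          - ((if j = (⟨0, hq⟩ : Fin q) then c i * B j k else 0)
             + (if (i : ℕ) + 1 = (j : ℕ) then B j k else 0)) := by
      intro j
      simp only [Matrix.sub_apply, Matrix.one_apply, Hmat, Matrix.of_apply]
      by_cases h0 : (j : ℕ) = 0
      · have hj : j = (⟨0, hq⟩ : Fin q) := Fin.ext h0
        have h1 : ¬ ((i : ℕ) + 1 = (j : ℕ)) := by omega
        subst hj
        simp only [h0, if_true, h1, if_false, if_pos rfl, add_zero]
        by_cases hij : i = (⟨0, hq⟩ : Fin q) <;> simp [hij] <;> ring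
      · have hj : ¬ (j = (⟨0, hq⟩ : Fin q)) := by
          intro h; apply h0; rw [h]
        simp only [h0, if_false, hj, zero_add]
        by_cases h1 : (i : ℕ) + 1 = (j : ℕ) <;>
          by_cases hij : i = j <;> simp [h1, hij] <;> ring
    rw [Finset.sum_congr rfl (fun j _ => hsummand j)]
    rw [Finset.sum_sub_distrib, Finset.sum_add_distrib]
    rw [Finset.sum_ite_eq Finset.univ i (fun j => B j k)]
    rw [Finset.sum_ite_eq' Finset.univ (⟨0, hq⟩ : Fin q) (fun j => c i * B j k)]
    simp only [Finset.mem_univ, if_true]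
    have hshift : (∑ j : Fin q, if (i : ℕ) + 1 = (j : ℕ) then B j k else 0)
        = if h : (i : ℕ) + 1 < q then B ⟨(i : ℕ) + 1, h⟩ k else 0 := by
      by_cases h : (i : ℕ) + 1 < q
      · rw [dif_pos h]
        have : ∀ j : Fin q, ((i : ℕ) + 1 = (j : ℕ)) ↔ j = ⟨(i : ℕ) + 1, h⟩ := by
          intro j; simp only [Fin.ext_iff, Fin.val_mk]; omega
        calc (∑ j : Fin q, if (i : ℕ) + 1 = (j : ℕ) then B j k else 0)
            = ∑ j : Fin q, if j = ⟨(i : ℕ) + 1, h⟩ then B j k else 0 := by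
              exact Finset.sum_congr rfl fun j _ => if_congr (this j) rfl rfl
          _ = B ⟨(i : ℕ) + 1, h⟩ k := by
              rw [Finset.sum_ite_eq' Finset.univ _ (fun j => B j k)]
              simp
      · rw [dif_neg h]
        refine Finset.sum_eq_zero fun j _ => ?_
        have : ¬ ((i : ℕ) + 1 = (j : ℕ)) := by have := j.isLt; omega
        simp [this]
    rw [hshift, hB00 k]
    rw [Matrix.one_apply]
    by_cases h : (i : ℕ) + 1 < q
    · rw [dif_pos h]
      simp only [hB, Matrix.of_apply]
      have hU1' : U (i : ℕ) = c i + U ((i : ℕ) + 1) := hU1 i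
      have hT1' : T ((i : ℕ) + 1) = T (i : ℕ) + c i := hT1 i
      by_cases hki : (k : ℕ) < (i : ℕ)
      · have hki' : (k : ℕ) < (i : ℕ) + 1 := by omega
        have hik : ¬ i = k := by intro hh; subst hh; omega
        rw [if_pos hki, if_pos hki', if_neg hik]
        field_simp
        rw [hU1']; ring
      · by_cases hik : i = k
        · subst hik
          have h1 : ¬ ((i : ℕ) < (i : ℕ)) := lt_irrefl _
          have h2 : (i : ℕ) < (i : ℕ) + 1 := Nat.lt_succ_self _
          rw [if_neg h1, if_pos h2, if_pos rfl]
          have hTU : T (i : ℕ) + U (i : ℕ) = s := hsplit _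
          field_simp
          rw [hU1'] at hTU
          linarith
        · have hk : (i : ℕ) < (k : ℕ) := by
            rcases lt_trichotomy ((i : ℕ)) ((k : ℕ)) with h' | h' | h'
            · exact h'
            · exact absurd (Fin.ext h') hik
            · exact absurd h' hki
          have hki' : ¬ ((k : ℕ) < (i : ℕ) + 1) := by omega
          rw [if_neg hki, if_neg hki', if_neg hik]
          field_simp
          rw [hT1']; ring
    · rw [dif_neg h]
      have hiq : (i : ℕ) + 1 = q := by have := i.isLt; omega
      simp only [hB, Matrix.of_apply]
      have hTU : T (i : ℕ) + U (i : ℕ) = s := hsplit _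
      have hUi : U (i : ℕ) = c i := by
        have := hU1 i
        rw [hiq, hUtop] at this
        simpa using this
      by_cases hki : (k : ℕ) < (i : ℕ)
      · have hik : ¬ i = k := by intro hh; subst hh; omega
        rw [if_pos hki, if_neg hik]
        field_simp
        rw [hUi]; ring
      · have hik : i = k := by
          have := k.isLt
          have : (k : ℕ) = (i : ℕ) := by omega
          exact Fin.ext this.symm
        subst hik
        have h1 : ¬ ((i : ℕ) < (i : ℕ)) := lt_irrefl _
        rw [if_neg h1, if_pos rfl]
        field_simp
        rw [hUi] at hTU
        linarith
  have hunit : IsUnit (1 - Hmat c) :=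
    (Matrix.isUnit_iff_isUnit_det _).mpr (Matrix.isUnit_det_of_right_inverse hmul)
  have hinv : (1 - Hmat c)⁻¹ = B := Matrix.inv_eq_right_inv hmul
  refine ⟨hunit, fun i j => by rw [hinv]; rfl, ?_⟩
  rw [hinv, hB00]
end

section
/- Let P and G be real symmetric n×n matrices such that every eigenvalue of P lies in [0, 1] and every eigenvalue of G lies in (−1, 1]. Then every eigenvalue of the product P·G (i.e., every complex root of its characteristic polynomial) is real and lies in (−1, 1]. -/
open Matrix Polynomial

namespace ProdSpecAux

open scoped ComplexOrder

variable {n : ℕ}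

lemma eval_charpoly' {R : Type*} [CommRing R] (M : Matrix (Fin n) (Fin n) R) (t : R) :
    M.charpoly.eval t = (t • (1 : Matrix (Fin n) (Fin n) R) - M).det := by
  rw [Matrix.charpoly, eval_det, matPolyEquiv_charmatrix]
  congr 1
  rw [Polynomial.eval_sub, Polynomial.eval_X, Polynomial.eval_C, scalar_apply]
  congr 1
  ext i j
  by_cases h : i = j <;> simp [h, Matrix.one_apply, Matrix.diagonal_apply]

lemma isRoot_charpoly_iff {K : Type*} [Field K] (M : Matrix (Fin n) (Fin n) K) (t : K) :
    M.charpoly.IsRoot t ↔ ∃ v, v ≠ 0 ∧ M *ᵥ v = t • v := by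
  rw [Polynomial.IsRoot, eval_charpoly', ← Matrix.exists_mulVec_eq_zero_iff]
  constructor
  · rintro ⟨v, hv, h⟩
    refine ⟨v, hv, ?_⟩
    rw [Matrix.sub_mulVec, Matrix.smul_mulVec, Matrix.one_mulVec, sub_eq_zero] at h
    exact h.symm
  · rintro ⟨v, hv, h⟩
    refine ⟨v, hv, ?_⟩
    rw [Matrix.sub_mulVec, Matrix.smul_mulVec, Matrix.one_mulVec, sub_eq_zero, h]

lemma charpoly_mul_comm' (A B : Matrix (Fin n) (Fin n) ℝ) :
    (A * B).charpoly = (B * A).charpoly := by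
  apply Polynomial.funext
  intro t
  rw [eval_charpoly', eval_charpoly']
  rcases eq_or_ne t 0 with rfl | ht
  · simp only [zero_smul, zero_sub, Matrix.det_neg, Matrix.det_mul]
    ring
  · have key : ∀ C D : Matrix (Fin n) (Fin n) ℝ,
        t • (1 : Matrix (Fin n) (Fin n) ℝ) - C * D
          = t • (1 - (t⁻¹ • C) * D) := by
      intro C D
      rw [smul_mul_assoc, smul_sub, smul_smul, mul_inv_cancel₀ ht, one_smul]
    rw [key A B, key B A, Matrix.det_smul, Matrix.det_smul]
    congr 1
    rw [Matrix.det_one_sub_mul_comm]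
    congr 2
    rw [mul_smul_comm, smul_mul_assoc]

lemma eig_isRoot (M : Matrix (Fin n) (Fin n) ℝ) (hM : M.IsHermitian) (i : Fin n) :
    M.charpoly.IsRoot (hM.eigenvalues i) := by
  refine (isRoot_charpoly_iff M _).2 ⟨hM.eigenvectorBasis i, ?_, hM.mulVec_eigenvectorBasis i⟩
  intro h
  exact hM.eigenvectorBasis.orthonormal.ne_zero i (by ext j; exact congrFun h j)

end ProdSpecAux

open ProdSpecAux
open scoped ComplexOrder
open scoped MatrixOrder

/-- Spectral content of the Forward–Backward linearization (Theorem 3.1(i)): if `P` is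
symmetric with eigenvalues in `[0,1]` and `G` is symmetric with eigenvalues in `(−1,1]`,
then every complex eigenvalue of `P·G` is real and lies in `(−1,1]`. -/
theorem product_symmetric_spectrum_real
    (n : ℕ) (P G : Matrix (Fin n) (Fin n) ℝ)
    (hP : P.IsSymm) (hG : G.IsSymm)
    (hPspec : ∀ t : ℝ, P.charpoly.IsRoot t → t ∈ Set.Icc (0 : ℝ) 1)
    (hGspec : ∀ t : ℝ, G.charpoly.IsRoot t → t ∈ Set.Ioc (-1 : ℝ) 1) :
    ∀ z : ℂ, (((P * G).map (algebraMap ℝ ℂ)).charpoly).IsRoot z →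
      z.im = 0 ∧ z.re ∈ Set.Ioc (-1 : ℝ) 1 := by
  classical
  intro z hz
  have hPH : P.IsHermitian := by
    rwa [Matrix.IsHermitian, Matrix.conjTranspose_eq_transpose_of_trivial]
  have hGH : G.IsHermitian := by
    rwa [Matrix.IsHermitian, Matrix.conjTranspose_eq_transpose_of_trivial]
  -- P is positive semidefinite
  have hPpsd : P.PosSemidef :=
    hPH.posSemidef_iff_eigenvalues_nonneg.mpr fun i => (hPspec _ (eig_isRoot P hPH i)).1
  -- 1 - P is positive semidefinite
  have h1P : (1 - P).IsHermitian := Matrix.isHermitian_one.sub hPH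
  have h1Ppsd : (1 - P).PosSemidef := by
    refine h1P.posSemidef_iff_eigenvalues_nonneg.mpr fun i => ?_
    show (0:ℝ) ≤ _
    obtain ⟨v, hv, hveq⟩ := (isRoot_charpoly_iff _ _).1 (eig_isRoot _ h1P i)
    rw [Matrix.sub_mulVec, Matrix.one_mulVec] at hveq
    have hPv : P *ᵥ v = (1 - h1P.eigenvalues i) • v := by
      rw [sub_smul, one_smul, ← hveq]; abel
    have := (hPspec _ ((isRoot_charpoly_iff _ _).2 ⟨v, hv, hPv⟩)).2
    linarith
  -- 1 - G is positive semidefinite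
  have h1G : (1 - G).IsHermitian := Matrix.isHermitian_one.sub hGH
  have h1Gpsd : (1 - G).PosSemidef := by
    refine h1G.posSemidef_iff_eigenvalues_nonneg.mpr fun i => ?_
    show (0:ℝ) ≤ _
    obtain ⟨v, hv, hveq⟩ := (isRoot_charpoly_iff _ _).1 (eig_isRoot _ h1G i)
    rw [Matrix.sub_mulVec, Matrix.one_mulVec] at hveq
    have hGv : G *ᵥ v = (1 - h1G.eigenvalues i) • v := by
      rw [sub_smul, one_smul, ← hveq]; abel
    have := (hGspec _ ((isRoot_charpoly_iff _ _).2 ⟨v, hv, hGv⟩)).2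
    linarith
  -- 1 + G is positive semidefinite
  have h1pG : (1 + G).IsHermitian := Matrix.isHermitian_one.add hGH
  have h1pGpsd : (1 + G).PosSemidef := by
    refine h1pG.posSemidef_iff_eigenvalues_nonneg.mpr fun i => ?_
    show (0:ℝ) ≤ _
    obtain ⟨v, hv, hveq⟩ := (isRoot_charpoly_iff _ _).1 (eig_isRoot _ h1pG i)
    rw [Matrix.add_mulVec, Matrix.one_mulVec] at hveq
    have hGv : G *ᵥ v = (h1pG.eigenvalues i - 1) • v := by
      rw [sub_smul, one_smul, ← hveq]; abel
    have := (hGspec _ ((isRoot_charpoly_iff _ _).2 ⟨v, hv, hGv⟩)).1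
    linarith
  -- square root of P
  set S : Matrix (Fin n) (Fin n) ℝ := CFC.sqrt P with hSdef
  have hSpsd : S.PosSemidef := nonneg_iff_posSemidef.mp (CFC.sqrt_nonneg P)
  have hSS : S * S = P := CFC.sqrt_mul_sqrt_self P hPpsd.nonneg
  have hSsymm : Sᵀ = S := by
    have := hSpsd.isHermitian
    rwa [Matrix.IsHermitian, Matrix.conjTranspose_eq_transpose_of_trivial] at this
  set A : Matrix (Fin n) (Fin n) ℝ := S * G * S with hAdef
  have hAsymm : Aᵀ = A := by
    rw [hAdef, Matrix.transpose_mul, Matrix.transpose_mul, hSsymm, hG, Matrix.mul_assoc]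
  have hcp : (P * G).charpoly = A.charpoly := by
    have h1 : P * G = S * (S * G) := by rw [← Matrix.mul_assoc, hSS]
    rw [h1, ProdSpecAux.charpoly_mul_comm' S (S * G)]
  -- pass to ℂ
  set f : ℝ →+* ℂ := (algebraMap ℝ ℂ)
  have hzA : ((A.map f).charpoly).IsRoot z := by
    rwa [Matrix.charpoly_map, ← hcp, ← Matrix.charpoly_map]
  have hBH : (A.map f).IsHermitian := by
    ext i j
    simp only [Matrix.conjTranspose_apply, Matrix.map_apply]
    rw [show A j i = A i j from by conv_lhs => rw [← hAsymm, Matrix.transpose_apply]]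
    simp [f, Complex.conj_ofReal]
  obtain ⟨w, hw, hweq⟩ := (isRoot_charpoly_iff _ _).1 hzA
  have hc : (star w) ⬝ᵥ w ≠ 0 := fun h => hw (dotProduct_star_self_eq_zero.1 h)
  have comp1 : (star w) ⬝ᵥ ((A.map f) *ᵥ w) = z * ((star w) ⬝ᵥ w) := by
    rw [hweq, dotProduct_smul, smul_eq_mul]
  have comp2 : (star w) ⬝ᵥ ((A.map f) *ᵥ w) = star z * ((star w) ⬝ᵥ w) := by
    rw [Matrix.dotProduct_mulVec, show star w ᵥ* (A.map f) = star ((A.map f) *ᵥ w) from by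
      rw [Matrix.star_mulVec, hBH], hweq, star_smul, smul_dotProduct, smul_eq_mul]
  have hzreal : star z = z := mul_right_cancel₀ hc (comp2.symm.trans comp1)
  have him : z.im = 0 := Complex.conj_eq_iff_im.1 hzreal
  set t : ℝ := z.re with htdef
  have hzt : z = (t : ℂ) := Complex.ext rfl (by simp [him])
  -- t is a real root of A.charpoly
  have htroot : A.charpoly.IsRoot t := by
    have h0 : ((A.charpoly.map f).eval (f t)) = 0 := by
      have := hzA
      rw [Matrix.charpoly_map] at this
      rwa [Polynomial.IsRoot, hzt] at this
    rw [Polynomial.eval_map, Polynomial.eval₂_at_apply] at h0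
    exact (_root_.map_eq_zero f).1 h0
  obtain ⟨v, hv, hveq⟩ := (isRoot_charpoly_iff _ _).1 htroot
  have hvecS : ∀ x : Fin n → ℝ, x ᵥ* S = S *ᵥ x := by
    intro x; rw [← hSsymm, Matrix.vecMul_transpose, hSsymm]
  have quad : t * (v ⬝ᵥ v) = (S *ᵥ v) ⬝ᵥ (G *ᵥ (S *ᵥ v)) := by
    have h1 : v ⬝ᵥ (A *ᵥ v) = t * (v ⬝ᵥ v) := by
      rw [hveq, dotProduct_smul, smul_eq_mul]
    rw [← h1, hAdef]
    conv_lhs => rw [← Matrix.mulVec_mulVec, ← Matrix.mulVec_mulVec,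
      Matrix.dotProduct_mulVec, hvecS]
  have huu : (S *ᵥ v) ⬝ᵥ (S *ᵥ v) = v ⬝ᵥ (P *ᵥ v) := by
    conv_lhs => rw [Matrix.dotProduct_mulVec, hvecS, Matrix.mulVec_mulVec, hSS]
    exact dotProduct_comm _ _
  have hvv0 : 0 ≤ v ⬝ᵥ v := Finset.sum_nonneg fun i _ => mul_self_nonneg (v i)
  have hvv : 0 < v ⬝ᵥ v :=
    lt_of_le_of_ne hvv0 fun h => hv (dotProduct_self_eq_zero.1 h.symm)
  have hPle : v ⬝ᵥ (P *ᵥ v) ≤ v ⬝ᵥ v := by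
    have h := h1Ppsd.dotProduct_mulVec_nonneg v
    rw [star_trivial, Matrix.sub_mulVec, Matrix.one_mulVec, dotProduct_sub] at h
    linarith
  have hGle : ∀ x : Fin n → ℝ, x ⬝ᵥ (G *ᵥ x) ≤ x ⬝ᵥ x := by
    intro x
    have h := h1Gpsd.dotProduct_mulVec_nonneg x
    rw [star_trivial, Matrix.sub_mulVec, Matrix.one_mulVec, dotProduct_sub] at h
    linarith
  have hGgt : ∀ x : Fin n → ℝ, x ≠ 0 → -(x ⬝ᵥ x) < x ⬝ᵥ (G *ᵥ x) := by
    intro x hx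
    have h := h1pGpsd.dotProduct_mulVec_nonneg x
    rw [star_trivial] at h
    have hne : x ⬝ᵥ ((1 + G) *ᵥ x) ≠ 0 := by
      intro h0
      have h1 : (1 + G) *ᵥ x = 0 := by
        have hiff := h1pGpsd.dotProduct_mulVec_zero_iff x
        rw [star_trivial] at hiff
        exact hiff.1 h0
      rw [Matrix.add_mulVec, Matrix.one_mulVec] at h1
      have hGx : G *ᵥ x = (-1 : ℝ) • x := by
        rw [neg_smul, one_smul]
        exact eq_neg_of_add_eq_zero_right h1
      have := (hGspec _ ((isRoot_charpoly_iff _ _).2 ⟨x, hx, hGx⟩)).1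
      exact absurd this (lt_irrefl _)
    have hlt : 0 < x ⬝ᵥ ((1 + G) *ᵥ x) := lt_of_le_of_ne h (Ne.symm hne)
    rw [Matrix.add_mulVec, Matrix.one_mulVec, dotProduct_add] at hlt
    linarith
  refine ⟨him, ?_, ?_⟩
  · -- -1 < t
    by_cases hu : S *ᵥ v = 0
    · have : t * (v ⬝ᵥ v) = 0 := by rw [quad, hu, zero_dotProduct]
      have ht0 : t = 0 := by
        rcases mul_eq_zero.1 this with h | h
        · exact h
        · exact absurd h (ne_of_gt hvv)
      rw [ht0]; norm_num
    · have h1 := hGgt _ hu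
      have h2 : (S *ᵥ v) ⬝ᵥ (S *ᵥ v) ≤ v ⬝ᵥ v := le_trans (le_of_eq huu) hPle
      have h3 : (-1 : ℝ) * (v ⬝ᵥ v) < t * (v ⬝ᵥ v) := by
        rw [quad]; nlinarith
      exact lt_of_mul_lt_mul_right h3 hvv0
  · -- t ≤ 1
    have h1 := hGle (S *ᵥ v)
    have h2 : (S *ᵥ v) ⬝ᵥ (S *ᵥ v) ≤ v ⬝ᵥ v := le_trans (le_of_eq huu) hPle
    have h3 : t * (v ⬝ᵥ v) ≤ 1 * (v ⬝ᵥ v) := by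
      rw [quad]; nlinarith
    exact le_of_mul_le_mul_right h3 hvv
end

section
/- Let W and Q be real symmetric n×n matrices such that every eigenvalue of W lies in (0, 1] and every eigenvalue of Q lies in [0, 1]. Then every eigenvalue of the matrix (1/2)I + (1/2)W(2Q − I) (i.e., every complex root of its characteristic polynomial) is real and lies in [0, 1]. -/
open Matrix Polynomial

section Aux

variable {m : Type*} [Fintype m] [DecidableEq m] {R : Type*} [CommRing R]

lemma my_eval_charpoly (M : Matrix m m R) (t : R) :
    M.charpoly.eval t = (Matrix.diagonal (fun _ => t) - M).det := by
  rw [Matrix.charpoly, ← Polynomial.coe_evalRingHom, RingHom.map_det]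
  congr 1
  ext i j
  by_cases h : i = j <;>
    simp [Matrix.charmatrix_apply, Matrix.sub_apply, Matrix.diagonal_apply, h]

lemma my_isRoot_one_sub_iff (A : Matrix m m R) (t : R) [Nontrivial R] [NoZeroDivisors R] :
    (1 - A).charpoly.IsRoot t ↔ A.charpoly.IsRoot (1 - t) := by
  have h1 : Matrix.diagonal (fun _ : m => t) - (1 - A)
      = -(Matrix.diagonal (fun _ : m => (1 - t)) - A) := by
    ext i j
    by_cases h : i = j <;>
      simp [Matrix.diagonal_apply, h, Matrix.sub_apply, Matrix.one_apply]
    ring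
  simp only [Polynomial.IsRoot, my_eval_charpoly, h1, Matrix.det_neg]
  constructor
  · intro h
    rcases mul_eq_zero.mp h with h' | h'
    · exact absurd h' (by simp [pow_eq_zero_iff'])
    · exact h'
  · intro h; simp [h]

lemma my_charpoly_diagonal (d : m → R) :
    (Matrix.diagonal d).charpoly = ∏ i, (X - C (d i)) := by
  rw [Matrix.charpoly]
  have h : charmatrix (Matrix.diagonal d) = Matrix.diagonal (fun i => (X : R[X]) - C (d i)) := by
    ext i j
    by_cases h : i = j <;>
      simp [Matrix.charmatrix_apply, Matrix.diagonal_apply, h]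
  rw [h, Matrix.det_diagonal]

lemma my_charpoly_conj (u : (Matrix m m R)ˣ) (A : Matrix m m R) :
    ((↑u : Matrix m m R) * A * (↑u⁻¹ : Matrix m m R)).charpoly = A.charpoly := by
  have hscalar : (Matrix.scalar m (X : R[X])) = (X : R[X]) • (1 : Matrix m m R[X]) := by
    ext i j
    by_cases h : i = j <;> simp [Matrix.scalar_apply, Matrix.diagonal_apply, h, Matrix.one_apply]
  have huv : ((C : R →+* R[X]).mapMatrix (↑u : Matrix m m R)) *
      ((C : R →+* R[X]).mapMatrix (↑u⁻¹ : Matrix m m R)) = 1 := by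
    rw [← RingHom.map_mul, Units.mul_inv, RingHom.map_one]
  have key : charmatrix ((↑u : Matrix m m R) * A * (↑u⁻¹ : Matrix m m R))
      = (C : R →+* R[X]).mapMatrix (↑u : Matrix m m R) * charmatrix A *
        (C : R →+* R[X]).mapMatrix (↑u⁻¹ : Matrix m m R) := by
    unfold charmatrix
    rw [RingHom.map_mul, RingHom.map_mul, Matrix.mul_sub, Matrix.sub_mul, hscalar]
    congr 1
    rw [Matrix.mul_smul, Matrix.mul_one, Matrix.smul_mul, huv]
  rw [Matrix.charpoly, Matrix.charpoly, key, Matrix.det_mul, Matrix.det_mul]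
  have : ((C : R →+* R[X]).mapMatrix (↑u : Matrix m m R)).det *
      ((C : R →+* R[X]).mapMatrix (↑u⁻¹ : Matrix m m R)).det = 1 := by
    rw [← Matrix.det_mul, huv, Matrix.det_one]
  calc ((C : R →+* R[X]).mapMatrix (↑u : Matrix m m R)).det * (charmatrix A).det *
        ((C : R →+* R[X]).mapMatrix (↑u⁻¹ : Matrix m m R)).det
      = (charmatrix A).det * (((C : R →+* R[X]).mapMatrix (↑u : Matrix m m R)).det *
        ((C : R →+* R[X]).mapMatrix (↑u⁻¹ : Matrix m m R)).det) := by ring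
    _ = (charmatrix A).det := by rw [this, mul_one]

lemma my_herm_charpoly {A : Matrix m m ℝ} (hA : A.IsHermitian) :
    A.charpoly = ∏ i, (X - C (hA.eigenvalues i)) := by
  set U : Matrix m m ℝ := (Matrix.IsHermitian.eigenvectorUnitary hA : Matrix m m ℝ) with hU
  have hmem : U ∈ Matrix.unitaryGroup m ℝ := (Matrix.IsHermitian.eigenvectorUnitary hA).2
  have h1 : U * star U = 1 := (Matrix.mem_unitaryGroup_iff).mp hmem
  have h2 : star U * U = 1 := (Matrix.mem_unitaryGroup_iff').mp hmem
  set u : (Matrix m m ℝ)ˣ := ⟨U, star U, h1, h2⟩ with hu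
  have hinv : (↑u⁻¹ : Matrix m m ℝ) = star U := rfl
  have hspec := hA.spectral_theorem
  have hdiag : (RCLike.ofReal ∘ hA.eigenvalues : m → ℝ) = hA.eigenvalues := by
    funext i; simp [RCLike.ofReal_real_eq_id]
  have hAeq : A = (↑u : Matrix m m ℝ) * Matrix.diagonal hA.eigenvalues * (↑u⁻¹ : Matrix m m ℝ) :=
    calc A = U * Matrix.diagonal (RCLike.ofReal ∘ hA.eigenvalues) * star U := hspec
      _ = _ := by rw [hdiag, hinv]
  conv_lhs => rw [hAeq]
  rw [my_charpoly_conj, my_charpoly_diagonal]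

lemma my_roots_eigen {A : Matrix m m ℝ} (hA : A.IsHermitian) (t : ℝ) :
    A.charpoly.IsRoot t ↔ ∃ i, hA.eigenvalues i = t := by
  rw [my_herm_charpoly hA]
  simp only [Polynomial.IsRoot, Polynomial.eval_prod, Polynomial.eval_sub, Polynomial.eval_X,
    Polynomial.eval_C, Finset.prod_eq_zero_iff, Finset.mem_univ, true_and, sub_eq_zero]
  constructor
  · rintro ⟨i, hi⟩; exact ⟨i, hi.symm⟩
  · rintro ⟨i, hi⟩; exact ⟨i, hi.symm⟩

lemma my_psd_smul {c : ℝ} (hc : 0 ≤ c) {X : Matrix m m ℝ} (hX : X.PosSemidef) :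
    (c • X).PosSemidef := by
  refine ⟨?_, fun x => ?_⟩
  · unfold Matrix.IsHermitian
    rw [Matrix.conjTranspose_smul, hX.1.eq]
    simp
  · exact (hX.smul hc).2 x

end Aux

/-- Spectral content of the Douglas–Rachford linearization with one smooth term
(Theorem 3.5): if `W` is symmetric with eigenvalues in `(0,1]` and `Q` is symmetric
with eigenvalues in `[0,1]`, then every complex eigenvalue of
`½I + ½W(2Q − I)` is real and lies in `[0,1]`. -/
theorem dr_linearization_spectrum_real
    (n : ℕ) (W Q : Matrix (Fin n) (Fin n) ℝ)
    (hW : W.IsSymm) (hQ : Q.IsSymm)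
    (hWspec : ∀ t : ℝ, W.charpoly.IsRoot t → t ∈ Set.Ioc (0 : ℝ) 1)
    (hQspec : ∀ t : ℝ, Q.charpoly.IsRoot t → t ∈ Set.Icc (0 : ℝ) 1) :
    ∀ z : ℂ,
      (((((1 : ℝ) / 2) • (1 : Matrix (Fin n) (Fin n) ℝ)
          + ((1 : ℝ) / 2) • (W * ((2 : ℝ) • Q - 1))).map
        (algebraMap ℝ ℂ)).charpoly).IsRoot z →
      z.im = 0 ∧ z.re ∈ Set.Icc (0 : ℝ) 1 := by
  classical
  set M : Matrix (Fin n) (Fin n) ℝ :=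
    ((1 : ℝ) / 2) • (1 : Matrix (Fin n) (Fin n) ℝ)
      + ((1 : ℝ) / 2) • (W * ((2 : ℝ) • Q - 1)) with hM
  have hWh : W.IsHermitian := by
    rwa [Matrix.IsHermitian, Matrix.conjTranspose_eq_transpose_of_trivial]
  have hQh : Q.IsHermitian := by
    rwa [Matrix.IsHermitian, Matrix.conjTranspose_eq_transpose_of_trivial]
  have hWe : ∀ i, hWh.eigenvalues i ∈ Set.Ioc (0:ℝ) 1 :=
    fun i => hWspec _ ((my_roots_eigen hWh _).mpr ⟨i, rfl⟩)
  have hWpsd : W.PosSemidef :=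
    hWh.posSemidef_iff_eigenvalues_nonneg.mpr (fun i => (hWe i).1.le)
  have h1Wh : (1 - W).IsHermitian := Matrix.isHermitian_one.sub hWh
  have h1Wpsd : (1 - W).PosSemidef := by
    refine h1Wh.posSemidef_iff_eigenvalues_nonneg.mpr fun i => show (0:ℝ) ≤ _ from ?_
    have hr : (1 - W).charpoly.IsRoot (h1Wh.eigenvalues i) :=
      (my_roots_eigen h1Wh _).mpr ⟨i, rfl⟩
    have h2 := hWspec _ ((my_isRoot_one_sub_iff W _).mp hr)
    linarith [h2.2]
  have hQpsd : Q.PosSemidef :=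
    hQh.posSemidef_iff_eigenvalues_nonneg.mpr
      (fun i => (hQspec _ ((my_roots_eigen hQh _).mpr ⟨i, rfl⟩)).1)
  have h1Qh : (1 - Q).IsHermitian := Matrix.isHermitian_one.sub hQh
  have h1Qpsd : (1 - Q).PosSemidef := by
    refine h1Qh.posSemidef_iff_eigenvalues_nonneg.mpr fun i => show (0:ℝ) ≤ _ from ?_
    have hr : (1 - Q).charpoly.IsRoot (h1Qh.eigenvalues i) :=
      (my_roots_eigen h1Qh _).mpr ⟨i, rfl⟩
    have h2 := hQspec _ ((my_isRoot_one_sub_iff Q _).mp hr)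
    linarith [h2.2]
  open scoped MatrixOrder in set R : Matrix (Fin n) (Fin n) ℝ := CFC.sqrt W with hR
  have hRpsd : R.PosSemidef := by
    open scoped MatrixOrder in exact (CFC.sqrt_nonneg W).posSemidef
  have hRh : R.IsHermitian := hRpsd.1
  have hRR : R * R = W := by
    open scoped MatrixOrder in exact CFC.sqrt_mul_sqrt_self W hWpsd.nonneg
  have hdetW : W.det ≠ 0 := by
    rw [hWh.det_eq_prod_eigenvalues]
    have : (0:ℝ) < ∏ i, hWh.eigenvalues i :=
      Finset.prod_pos fun i _ => (hWe i).1
    simpa using this.ne'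
  have hdetR : R.det ≠ 0 := by
    intro h
    apply hdetW
    rw [← hRR, Matrix.det_mul, h, mul_zero]
  have hRunit : IsUnit R :=
    (Matrix.isUnit_iff_isUnit_det R).mpr (isUnit_iff_ne_zero.mpr hdetR)
  obtain ⟨u, hu⟩ := hRunit
  set A : Matrix (Fin n) (Fin n) ℝ :=
    ((1:ℝ)/2) • (1 : Matrix (Fin n) (Fin n) ℝ)
      + ((1:ℝ)/2) • (R * ((2:ℝ) • Q - 1) * R) with hA
  have hMu : M = (↑u : Matrix (Fin n) (Fin n) ℝ) * A * (↑u⁻¹ : Matrix (Fin n) (Fin n) ℝ) := by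
    rw [Units.eq_mul_inv_iff_mul_eq, hu, hM, hA, ← hRR]
    simp only [Matrix.add_mul, Matrix.mul_add, Matrix.smul_mul, Matrix.mul_smul,
      Matrix.one_mul, Matrix.mul_one, Matrix.mul_assoc]
  have hch : M.charpoly = A.charpoly := by rw [hMu, my_charpoly_conj]
  have hSh : (((2:ℝ) • Q - 1) : Matrix (Fin n) (Fin n) ℝ)ᴴ = (2:ℝ) • Q - 1 := by
    rw [Matrix.conjTranspose_sub, Matrix.conjTranspose_smul, Matrix.conjTranspose_one, hQh.eq]
    norm_num
  have hAh : A.IsHermitian := by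
    unfold Matrix.IsHermitian
    rw [hA, Matrix.conjTranspose_add, Matrix.conjTranspose_smul, Matrix.conjTranspose_smul,
      Matrix.conjTranspose_one, Matrix.conjTranspose_mul, Matrix.conjTranspose_mul,
      hSh, hRh.eq]
    rw [Matrix.mul_assoc]
    norm_num
  have expand : R * ((2:ℝ) • Q - 1) * R = (2:ℝ) • (R * Q * R) - R * R := by
    rw [Matrix.mul_sub, Matrix.sub_mul, Matrix.mul_smul, Matrix.smul_mul, Matrix.mul_one]
  have hRQR : (R * Q * R).PosSemidef := by
    have h0 := hQpsd.conjTranspose_mul_mul_same R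
    rwa [hRh.eq] at h0
  have hR1QR : (R * (1 - Q) * R).PosSemidef := by
    have h0 := h1Qpsd.conjTranspose_mul_mul_same R
    rwa [hRh.eq] at h0
  have hApsd : A.PosSemidef := by
    have key : A = ((1:ℝ)/2) • (1 - W) + R * Q * R := by
      rw [hA, expand, ← hRR]
      module
    rw [key]
    exact (my_psd_smul (by norm_num) h1Wpsd).add hRQR
  have h1Apsd : (1 - A).PosSemidef := by
    have key : 1 - A = ((1:ℝ)/2) • (1 - W) + R * (1 - Q) * R := by
      have expand2 : R * (1 - Q) * R = R * R - R * Q * R := by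
        rw [Matrix.mul_sub, Matrix.sub_mul, Matrix.mul_one]
      rw [hA, expand, expand2, ← hRR]
      module
    rw [key]
    exact (my_psd_smul (by norm_num) h1Wpsd).add hR1QR
  have h1Ah : (1 - A).IsHermitian := h1Apsd.1
  have hAe : ∀ i, hAh.eigenvalues i ∈ Set.Icc (0:ℝ) 1 := by
    intro i
    constructor
    · exact hApsd.eigenvalues_nonneg i
    · have hr : A.charpoly.IsRoot (hAh.eigenvalues i) := (my_roots_eigen hAh _).mpr ⟨i, rfl⟩
      have hr' : (1 - A).charpoly.IsRoot (1 - hAh.eigenvalues i) := by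
        rw [my_isRoot_one_sub_iff]
        simpa using hr
      obtain ⟨j, hj⟩ := (my_roots_eigen h1Ah _).mp hr'
      have hnn := h1Apsd.eigenvalues_nonneg j
      rw [hj] at hnn
      linarith
  intro z hz
  rw [Matrix.charpoly_map, hch, my_herm_charpoly hAh] at hz
  simp only [Polynomial.map_prod, Polynomial.map_sub, Polynomial.map_X, Polynomial.map_C,
    Polynomial.IsRoot, Polynomial.eval_prod, Polynomial.eval_sub, Polynomial.eval_X,
    Polynomial.eval_C, Finset.prod_eq_zero_iff, Finset.mem_univ, true_and,
    sub_eq_zero] at hz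
  obtain ⟨i, hi⟩ := hz
  have hz' : z = ((hAh.eigenvalues i : ℝ) : ℂ) := by
    rw [hi]; rfl
  refine ⟨by rw [hz']; exact Complex.ofReal_im _, ?_⟩
  rw [hz', Complex.ofReal_re]
  exact hAe i
end

section
/- Let θ ∈ (0, π/2) and M = cos θ · [[cos θ, sin θ], [−sin θ, cos θ]], and let z_k = M^k z₀ for some z₀ ∈ ℝ². Then for every k ≥ 1, ⟨z_k − z_{k−1}, z_k⟩ = 0; consequently, for every a ∈ ℝ, ‖z_k + a(z_k − z_{k−1})‖² = ‖z_k‖² + a² ‖z_k − z_{k−1}‖², and if z₀ ≠ 0 then z_k ≠ z_{k−1} and every inertial extrapolation z_k + a(z_k − z_{k−1}) with a ≠ 0 is strictly farther from the limit point 0 than z_k is. -/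
open Matrix

/-- On the logarithmic spiral generated by `M = cos θ · R_θ`, the update direction
`z_k − z_{k−1}` is orthogonal to `z_k`; hence every inertial extrapolation
`z_k + a(z_k − z_{k−1})` with `a ≠ 0` is strictly farther from the limit `0` than `z_k`. -/
theorem inertial_fails_on_logarithmic_spiral
    (θ : ℝ) (hθ : θ ∈ Set.Ioo 0 (Real.pi / 2))
    (M : Matrix (Fin 2) (Fin 2) ℝ)
    (hM : M = Real.cos θ • !![Real.cos θ, Real.sin θ; -Real.sin θ, Real.cos θ])
    (z₀ : Fin 2 → ℝ) (z : ℕ → (Fin 2 → ℝ)) (hz : ∀ k, z k = (M ^ k).mulVec z₀) :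
    (∀ k : ℕ, 1 ≤ k → (z k - z (k - 1)) ⬝ᵥ z k = 0) ∧
    (∀ k : ℕ, 1 ≤ k → ∀ a : ℝ,
      euclNorm (z k + a • (z k - z (k - 1))) ^ 2 =
        euclNorm (z k) ^ 2 + a ^ 2 * euclNorm (z k - z (k - 1)) ^ 2) ∧
    (z₀ ≠ 0 → ∀ k : ℕ, 1 ≤ k → z k ≠ z (k - 1) ∧
      ∀ a : ℝ, a ≠ 0 → euclNorm (z k) < euclNorm (z k + a • (z k - z (k - 1)))) := by
  obtain ⟨hθ0, hθπ⟩ := hθ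
  have hsc := Real.sin_sq_add_cos_sq θ
  have hs : 0 < Real.sin θ := Real.sin_pos_of_pos_of_lt_pi hθ0 (lt_trans hθπ (by linarith [Real.pi_pos]))
  -- step recursion
  have hstep : ∀ k : ℕ, z (k + 1) = M.mulVec (z k) := by
    intro k
    rw [hz, hz, pow_succ', ← Matrix.mulVec_mulVec]
  -- explicit form of M.mulVec v
  have hmv : ∀ v : Fin 2 → ℝ,
      M.mulVec v = ![Real.cos θ * (Real.cos θ * v 0 + Real.sin θ * v 1),
                     Real.cos θ * (-Real.sin θ * v 0 + Real.cos θ * v 1)] := by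
    intro v
    subst hM
    funext i
    fin_cases i <;>
      simp [Matrix.mulVec, dotProduct, Fin.sum_univ_two] <;> ring
  -- orthogonality
  have hdot : ∀ v : Fin 2 → ℝ, (M.mulVec v - v) ⬝ᵥ (M.mulVec v) = 0 := by
    intro v
    rw [hmv]
    simp [dotProduct, Fin.sum_univ_two]
    linear_combination (Real.cos θ ^ 2 * (v 0 ^ 2 + v 1 ^ 2)) * hsc
  -- norm contraction
  have hnorm : ∀ v : Fin 2 → ℝ,
      ∑ i, (M.mulVec v) i ^ 2 = Real.cos θ ^ 2 * ∑ i, v i ^ 2 := by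
    intro v
    rw [hmv]
    simp [Fin.sum_univ_two]
    linear_combination (Real.cos θ ^ 2 * (v 0 ^ 2 + v 1 ^ 2)) * hsc
  have hzsq : ∀ k : ℕ, ∑ i, z k i ^ 2 = (Real.cos θ ^ 2) ^ k * ∑ i, z₀ i ^ 2 := by
    intro k
    induction k with
    | zero => simp [hz 0]
    | succ n ih => rw [hstep n, hnorm, ih, pow_succ]; ring
  have hE : ∀ x : Fin 2 → ℝ, euclNorm x ^ 2 = ∑ i, x i ^ 2 := fun x =>
    Real.sq_sqrt (by positivity)
  have hEnn : ∀ x : Fin 2 → ℝ, 0 ≤ euclNorm x := fun x => Real.sqrt_nonneg _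
  -- the three parts
  have part1 : ∀ k : ℕ, 1 ≤ k → (z k - z (k - 1)) ⬝ᵥ z k = 0 := by
    intro k hk
    obtain ⟨m, rfl⟩ := Nat.exists_eq_add_of_le hk
    have h1 : 1 + m - 1 = m := by omega
    rw [h1, add_comm 1 m, hstep m]
    exact hdot (z m)
  have part2 : ∀ k : ℕ, 1 ≤ k → ∀ a : ℝ,
      euclNorm (z k + a • (z k - z (k - 1))) ^ 2 =
        euclNorm (z k) ^ 2 + a ^ 2 * euclNorm (z k - z (k - 1)) ^ 2 := by
    intro k hk a
    have hd := part1 k hk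
    simp only [dotProduct, Fin.sum_univ_two] at hd
    simp only [hE, Fin.sum_univ_two, Pi.add_apply, Pi.smul_apply, Pi.sub_apply,
      smul_eq_mul] at *
    linear_combination (2 * a) * hd
  refine ⟨part1, part2, ?_⟩
  intro hz0 k hk
  -- positivity of ∑ z₀ i ^ 2
  have hz0pos : 0 < ∑ i, z₀ i ^ 2 := by
    obtain ⟨i, hi⟩ := Function.ne_iff.mp hz0
    have hi' : z₀ i ≠ 0 := by simpa using hi
    exact Finset.sum_pos' (fun j _ => sq_nonneg _)
      ⟨i, Finset.mem_univ i, by positivity⟩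
  have hc : 0 < Real.cos θ := Real.cos_pos_of_mem_Ioo ⟨by linarith [Real.pi_pos], hθπ⟩
  have hzkpos : ∀ m : ℕ, 0 < ∑ i, z m i ^ 2 := by
    intro m
    rw [hzsq]
    positivity
  have hne : z k ≠ z (k - 1) := by
    obtain ⟨m, rfl⟩ := Nat.exists_eq_add_of_le hk
    have h1 : 1 + m - 1 = m := by omega
    rw [h1]
    intro heq
    have h2 : ∑ i, z (1 + m) i ^ 2 = Real.cos θ ^ 2 * ∑ i, z m i ^ 2 := by
      rw [add_comm 1 m, hstep m, hnorm]
    rw [heq] at h2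
    have hc2 : Real.cos θ ^ 2 < 1 := by nlinarith [hs]
    nlinarith [mul_pos (sub_pos.mpr hc2) (hzkpos m)]
  refine ⟨hne, ?_⟩
  intro a ha
  have hdne : z k - z (k - 1) ≠ 0 := sub_ne_zero.mpr hne
  have hdpos : 0 < ∑ i, (z k - z (k - 1)) i ^ 2 := by
    obtain ⟨i, hi⟩ := Function.ne_iff.mp hdne
    have hi' : (z k - z (k - 1)) i ≠ 0 := by simpa using hi
    exact Finset.sum_pos' (fun j _ => sq_nonneg _)
      ⟨i, Finset.mem_univ i, by positivity⟩
  have hsq : euclNorm (z k) ^ 2 < euclNorm (z k + a • (z k - z (k - 1))) ^ 2 := by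
    rw [part2 k hk a]
    have h2 : 0 < a ^ 2 * euclNorm (z k - z (k - 1)) ^ 2 := by
      rw [hE]; positivity
    linarith
  exact lt_of_pow_lt_pow_left₀ 2 (hEnn _) hsq
end

section
/- Let U be a 2×2 real orthogonal matrix, let σ₁, σ₂ ∈ ℝ with 0 < |σ₂| < σ₁ < 1, set M = U · diag(σ₁, σ₂) · Uᵀ, and let z_k = M^k z₀ where the first component of Uᵀ z₀ is nonzero. Then for every k ≥ 1, z_k ≠ 0 and z_k ≠ z_{k−1}, and the quantity cos ϑ_k = ⟨z_k − z_{k−1}, −z_k⟩/(‖z_k − z_{k−1}‖ · ‖z_k‖) converges to 1 as k → ∞; that is, the direction z_k − z_{k−1} asymptotically points towards the limit point z* = 0. -/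
open Matrix Filter

/-- On the straight-line trajectory generated by `M = U diag(σ₁, σ₂) Uᵀ` with
`0 < |σ₂| < σ₁ < 1`, the direction `z_k − z_{k−1}` asymptotically points towards the
limit `0`: `cos ϑ_k = ⟨z_k − z_{k−1}, −z_k⟩/(‖z_k − z_{k−1}‖‖z_k‖) → 1`. -/
theorem update_direction_points_to_limit
    (U : Matrix (Fin 2) (Fin 2) ℝ) (hU : Uᵀ * U = 1)
    (σ₁ σ₂ : ℝ) (h1 : 0 < |σ₂|) (h2 : |σ₂| < σ₁) (h3 : σ₁ < 1)
    (M : Matrix (Fin 2) (Fin 2) ℝ) (hM : M = U * Matrix.diagonal ![σ₁, σ₂] * Uᵀ)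
    (z₀ : Fin 2 → ℝ) (h0 : Uᵀ.mulVec z₀ 0 ≠ 0)
    (z : ℕ → (Fin 2 → ℝ)) (hz : ∀ k, z k = (M ^ k).mulVec z₀) :
    (∀ k : ℕ, 1 ≤ k → z k ≠ 0 ∧ z k ≠ z (k - 1)) ∧
    Tendsto
      (fun k => ((z k - z (k - 1)) ⬝ᵥ (-(z k)))
        / (euclNorm (z k - z (k - 1)) * euclNorm (z k)))
      atTop (nhds 1) := by
  have hσ₁pos : 0 < σ₁ := lt_trans h1 h2
  have hσ₁ne : σ₁ ≠ 0 := ne_of_gt hσ₁pos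
  have h1σ : 0 < 1 - σ₁ := by linarith
  have hUU : U * Uᵀ = 1 := mul_eq_one_comm.mp hU
  set w : Fin 2 → ℝ := Uᵀ.mulVec z₀ with hw
  set d : Fin 2 → ℝ := ![σ₁, σ₂] with hd
  set Y : ℕ → Fin 2 → ℝ := fun k i => d i ^ k * w i with hY
  have hw0 : w 0 ≠ 0 := h0
  -- powers of M
  have hMk : ∀ k : ℕ, M ^ k = U * (Matrix.diagonal d) ^ k * Uᵀ := by
    intro k
    induction k with
    | zero => simpa using hUU.symm
    | succ n ih =>
      rw [pow_succ, ih, hM, pow_succ]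
      simp only [Matrix.mul_assoc]
      rw [← Matrix.mul_assoc Uᵀ U, hU, Matrix.one_mul]
  have hzY : ∀ k, z k = U.mulVec (Y k) := by
    intro k
    have hYk : Y k = (Matrix.diagonal d ^ k).mulVec w := by
      rw [Matrix.diagonal_pow]
      ext i
      simp [Matrix.mulVec_diagonal, hY]
    rw [hz, hMk k, hYk, hw, Matrix.mulVec_mulVec, Matrix.mulVec_mulVec, Matrix.mul_assoc]
  have hvU : ∀ x : Fin 2 → ℝ, Matrix.vecMul (U.mulVec x) U = x := by
    intro x
    rw [← Matrix.vecMul_transpose, Matrix.vecMul_vecMul, hU, Matrix.vecMul_one]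
  have hdot : ∀ x y : Fin 2 → ℝ, (U.mulVec x) ⬝ᵥ (U.mulVec y) = x ⬝ᵥ y := by
    intro x y
    rw [Matrix.dotProduct_mulVec, hvU]
  have hnormeq : ∀ x : Fin 2 → ℝ, euclNorm (U.mulVec x) = Real.sqrt (x ⬝ᵥ x) := by
    intro x
    have h : euclNorm (U.mulVec x) = Real.sqrt ((U.mulVec x) ⬝ᵥ (U.mulVec x)) := by
      simp [euclNorm, dotProduct, sq]
    rw [h, hdot]
  have hinj : ∀ x : Fin 2 → ℝ, U.mulVec x = 0 → x = 0 := by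
    intro x hx
    have h : Uᵀ.mulVec (U.mulVec x) = x := by
      rw [Matrix.mulVec_mulVec, hU, Matrix.one_mulVec]
    rw [hx, Matrix.mulVec_zero] at h
    exact h.symm
  constructor
  · intro k hk
    obtain ⟨j, rfl⟩ : ∃ j, k = j + 1 := ⟨k - 1, (Nat.succ_pred_eq_of_pos hk).symm⟩
    constructor
    · intro hzero
      have hY0 : Y (j + 1) = 0 := hinj _ (by rw [← hzY]; exact hzero)
      have h00 := congrFun hY0 0
      simp [hY, hd] at h00
      exact h00.elim hσ₁ne hw0
    · intro heq
      have hsub : U.mulVec (Y (j + 1) - Y j) = 0 := by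
        rw [Matrix.mulVec_sub, ← hzY, ← hzY]
        simp only [Nat.add_sub_cancel] at heq
        rw [heq, sub_self]
      have hY0 := congrFun (hinj _ hsub) 0
      simp [hY, hd] at hY0
      have hfac : σ₁ ^ j * ((σ₁ - 1) * w 0) = 0 := by linear_combination hY0
      rcases mul_eq_zero.mp hfac with h | h
      · exact pow_ne_zero _ hσ₁ne h
      rcases mul_eq_zero.mp h with h | h
      · linarith [sub_eq_zero.mp h]
      · exact hw0 h
  · -- the limit
    set r : ℝ := σ₂ / σ₁ with hrdef
    have hσ₂eq : σ₂ = σ₁ * r := by rw [hrdef]; field_simp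
    have hr2 : r ^ 2 < 1 := by
      have habs : σ₂ ^ 2 < σ₁ ^ 2 := by nlinarith [sq_abs σ₂, abs_nonneg σ₂]
      rw [hrdef, div_pow, div_lt_one (by positivity)]
      exact habs
    set w0 : ℝ := w 0 with hw0def
    set w1 : ℝ := w 1 with hw1def
    set a : ℝ := (1 - σ₁) * w0 ^ 2 with hadef
    set b : ℝ := r * (1 - σ₂) * w1 ^ 2 with hbdef
    set c : ℝ := (1 - σ₁) ^ 2 * w0 ^ 2 with hcdef
    set e : ℝ := (1 - σ₂) ^ 2 * w1 ^ 2 with hedef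
    set f : ℝ := w0 ^ 2 with hfdef
    set g : ℝ := r ^ 2 * w1 ^ 2 with hgdef
    set t : ℕ → ℝ := fun j => (r ^ 2) ^ j with htdef
    have hapos : 0 < a := mul_pos h1σ (pow_two_pos_of_ne_zero hw0)
    have ht : Tendsto t atTop (nhds 0) :=
      tendsto_pow_atTop_nhds_zero_of_lt_one (sq_nonneg r) hr2
    -- key pointwise identity
    have hkey : ∀ j : ℕ,
        ((z (j+1) - z (j+1-1)) ⬝ᵥ (-(z (j+1))))
          / (euclNorm (z (j+1) - z (j+1-1)) * euclNorm (z (j+1)))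
        = (a + b * t j) / (Real.sqrt (c + e * t j) * Real.sqrt (f + g * t j)) := by
      intro j
      simp only [Nat.add_sub_cancel]
      have hzsub : z (j+1) - z j = U.mulVec (Y (j+1) - Y j) := by
        rw [Matrix.mulVec_sub, ← hzY, ← hzY]
      have hzneg : -(z (j+1)) = U.mulVec (-(Y (j+1))) := by
        rw [Matrix.mulVec_neg, ← hzY]
      rw [hzsub, hzneg, hdot, hnormeq, hzY, hnormeq]
      have hnum : (Y (j+1) - Y j) ⬝ᵥ (-(Y (j+1))) = σ₁ ^ (2*j+1) * (a + b * t j) := by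
        simp [dotProduct, Fin.sum_univ_two, hY, hd, hadef, hbdef, htdef,
          hw0def, hw1def]
        rw [hσ₂eq]
        ring
      have hS1 : (Y (j+1) - Y j) ⬝ᵥ (Y (j+1) - Y j)
          = (σ₁ ^ j) ^ 2 * (c + e * t j) := by
        simp [dotProduct, Fin.sum_univ_two, hY, hd, hcdef, hedef, htdef,
          hw0def, hw1def]
        rw [hσ₂eq]
        ring
      have hS2 : (Y (j+1)) ⬝ᵥ (Y (j+1)) = (σ₁ ^ (j+1)) ^ 2 * (f + g * t j) := by
        simp [dotProduct, Fin.sum_univ_two, hY, hd, hfdef, hgdef, htdef,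
          hw0def, hw1def]
        rw [hσ₂eq]
        ring
      rw [hnum, hS1, hS2, Real.sqrt_mul (sq_nonneg _), Real.sqrt_mul (sq_nonneg _),
        Real.sqrt_sq (by positivity), Real.sqrt_sq (by positivity)]
      have hrearr : σ₁ ^ j * Real.sqrt (c + e * t j) * (σ₁ ^ (j+1) * Real.sqrt (f + g * t j))
          = σ₁ ^ (2*j+1) * (Real.sqrt (c + e * t j) * Real.sqrt (f + g * t j)) := by
        ring
      rw [hrearr, mul_div_mul_left _ _ (pow_ne_zero _ hσ₁ne)]
    -- limit of the explicit formula
    have hsqrtc : Real.sqrt c = (1 - σ₁) * |w0| := by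
      have : c = ((1 - σ₁) * |w0|) ^ 2 := by rw [mul_pow, sq_abs]
      rw [this, Real.sqrt_sq (by positivity)]
    have hsqrtf : Real.sqrt f = |w0| := Real.sqrt_sq_eq_abs w0
    have hprod : Real.sqrt c * Real.sqrt f = a := by
      rw [hsqrtc, hsqrtf, hadef, hfdef, ← sq_abs w0]
      ring
    have hlim : Tendsto (fun j => (a + b * t j) / (Real.sqrt (c + e * t j) * Real.sqrt (f + g * t j)))
        atTop (nhds 1) := by
      have hA : Tendsto (fun j => a + b * t j) atTop (nhds a) := by
        have := (ht.const_mul b).const_add a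
        simpa using this
      have hC : Tendsto (fun j => c + e * t j) atTop (nhds c) := by
        have := (ht.const_mul e).const_add c
        simpa using this
      have hD : Tendsto (fun j => f + g * t j) atTop (nhds f) := by
        have := (ht.const_mul g).const_add f
        simpa using this
      have hB : Tendsto (fun j => Real.sqrt (c + e * t j) * Real.sqrt (f + g * t j))
          atTop (nhds (Real.sqrt c * Real.sqrt f)) :=
        ((Real.continuous_sqrt.tendsto c).comp hC).mul ((Real.continuous_sqrt.tendsto f).comp hD)
      rw [hprod] at hB
      have := hA.div hB (ne_of_gt hapos)
      simpa [div_self (ne_of_gt hapos), Pi.div_def] using this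
    refine (Filter.tendsto_add_atTop_iff_nat 1).mp ?_
    exact Tendsto.congr (fun j => (hkey j).symm) hlim
end
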